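/- arXiv:2502.01761 — 5 statements merged into one kernel-verified Lean document; each statement's English description precedes it below -/
import Mathlib

section
/- Let R₂ ⊂ R₁ be real matrix systems on ℂ^n and π : H(R₁) → H(R₂) the orthogonal projection with respect to the Frobenius inner product. Then π(C(R₁)^∨) = C(R₂)^∨ and π(D(R₁)) = D(R₂). -/
/-!
Work in the real Hilbert space of `n × n` complex matrices with the Frobenius inner product
`Re tr(Aᴴ B)`. There `C(R)^∨` is the dual, inside the hermitian subspace `H(R)`, of the cone of
accretive matrices (`Re v* A v ≥ 0` for all `v`), itself the dual of the rank-one matrices `v v*`.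
As `π` is self-adjoint, `π(C(R₁)^∨) ⊆ C(R₂)^∨`. Conversely, `‖X‖ ≤ tr X` on `C(R₁)^∨` and `π`
preserves the trace (`1 ∈ H(R₂)`), so `π(C(R₁)^∨)` is a closed cone. A point of `C(R₂)^∨` outside
it would be separated from it by some `C ∈ H(R₂)`; by the bipolar theorem `C` is then positive
semidefinite, which contradicts duality. Preservation of the trace gives the statement for `D`.
-/

open Matrix ComplexOrder

/-- The dual cone `C(R)^∨` of the positive cone of a real matrix system `R`,
inside the hermitian part of `R`, w.r.t. the inner product `Re tr(A* B)`. -/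
def dualCone (n : ℕ) (R : Set (Matrix (Fin n) (Fin n) ℂ)) :
    Set (Matrix (Fin n) (Fin n) ℂ) :=
  {A | A ∈ R ∧ Aᴴ = A ∧ ∀ B ∈ R, B.PosSemidef → 0 ≤ ((A * B).trace).re}

/-- The density matrices `D(R)` of a real matrix system `R`. -/
def dmat (n : ℕ) (R : Set (Matrix (Fin n) (Fin n) ℂ)) :
    Set (Matrix (Fin n) (Fin n) ℂ) :=
  {ρ | ρ ∈ dualCone n R ∧ ρ.trace = 1}

open Set
open scoped RealInnerProductSpace

theorem IsClosed.image_of_norm_le {E F : Type*} [NormedAddCommGroup E] [ProperSpace E]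
    [TopologicalSpace F] [T2Space F] {K : Set E} (hK : IsClosed K) {f : E → F}
    (hf : Continuous f) {g : F → ℝ} (hg : Continuous g) (hbound : ∀ x ∈ K, ‖x‖ ≤ g (f x)) :
    IsClosed (f '' K) := by
  refine closure_subset_iff_isClosed.mp fun y hy => ?_
  set r := g y + 1
  have hcompact : IsCompact (f '' (K ∩ Metric.closedBall 0 r)) :=
    ((isCompact_closedBall 0 r).inter_left hK).image hf
  have hsub : {z | g z < r} ∩ f '' K ⊆ f '' (K ∩ Metric.closedBall 0 r) := by
    rintro _ ⟨hz, x, hx, rfl⟩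
    exact ⟨x, ⟨hx, mem_closedBall_zero_iff.mpr ((hbound x hx).trans hz.le)⟩, rfl⟩
  have hy' := closure_mono hsub ((isOpen_lt hg continuous_const).inter_closure
    ⟨show g y < r by linarith, hy⟩)
  obtain ⟨x, hx, rfl⟩ := hcompact.isClosed.closure_subset hy'
  exact ⟨x, hx.1, rfl⟩

theorem Submodule.inner_starProjection_left_of_mem {𝕜 E : Type*} [RCLike 𝕜]
    [NormedAddCommGroup E] [InnerProductSpace 𝕜 E] (S : Submodule 𝕜 E) [S.HasOrthogonalProjection]
    (v : E) {u : E} (hu : u ∈ S) : inner 𝕜 (S.starProjection v) u = inner 𝕜 v u := by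
  rw [inner_starProjection_left_eq_right, S.starProjection_eq_self_iff.mpr hu]

section Cones

variable {E : Type*} [NormedAddCommGroup E] [InnerProductSpace ℝ E] [FiniteDimensional ℝ E]

/-- `dualCone n R` is `innerDualIn H(R) (accretiveCone _)` read through `toFrobeniusSpace`
(`dualCone_eq_preimage`). -/
noncomputable def innerDualIn (S : Submodule ℝ E) (K : Set E) : PointedCone ℝ E :=
  (S : PointedCone ℝ E) ⊓ (ProperCone.innerDual (K ∩ S) : PointedCone ℝ E)

theorem mem_innerDualIn {S : Submodule ℝ E} {K : Set E} {x : E} :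
    x ∈ innerDualIn S K ↔ x ∈ S ∧ ∀ c ∈ K, c ∈ S → 0 ≤ ⟪c, x⟫ := by
  simp [innerDualIn]

theorem isClosed_innerDualIn (S : Submodule ℝ E) (K : Set E) :
    IsClosed (innerDualIn S K : Set E) :=
  S.closed_of_finiteDimensional.inter (ProperCone.innerDual _).isClosed

theorem starProjection_image_innerDualIn {S₁ S₂ : Submodule ℝ E} (h : S₂ ≤ S₁)
    (K : ProperCone ℝ E) (hclosed : IsClosed (S₂.starProjection '' innerDualIn S₁ K)) :
    S₂.starProjection '' innerDualIn S₁ K = innerDualIn S₂ K := by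
  refine Subset.antisymm ?_ fun b hb => ?_
  · rintro _ ⟨x, hx, rfl⟩
    rw [SetLike.mem_coe, mem_innerDualIn] at hx ⊢
    refine ⟨S₂.starProjection_apply_mem x, fun c hcK hcS => ?_⟩
    rw [real_inner_comm, S₂.inner_starProjection_left_of_mem x hcS, real_inner_comm]
    exact hx.2 c hcK (h hcS)
  -- Separate `b` from the closed cone `T`; the bipolar theorem puts the projected normal in `K`.
  by_contra hb'
  let T : ProperCone ℝ E := ⟨(innerDualIn S₁ K).map S₂.starProjection.toLinearMap, hclosed⟩
  obtain ⟨y, hyT, hby⟩ := T.hyperplane_separation' (x₀ := b) hb'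
  rw [SetLike.mem_coe, mem_innerDualIn] at hb
  have hK : S₂.starProjection y ∈ K := by
    rw [← ProperCone.innerDual_innerDual K, ProperCone.mem_innerDual]
    intro w hw
    have hw₁ : S₁.starProjection w ∈ innerDualIn S₁ K := by
      refine mem_innerDualIn.mpr ⟨S₁.starProjection_apply_mem w, fun c hcK hcS => ?_⟩
      rw [real_inner_comm, S₁.inner_starProjection_left_of_mem w hcS, real_inner_comm]
      exact hw hcK
    calc 0 ≤ ⟪S₂.starProjection (S₁.starProjection w), y⟫ := hyT _ ⟨_, hw₁, rfl⟩
      _ = ⟪w, S₂.starProjection y⟫ := by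
        rw [← ContinuousLinearMap.comp_apply, Submodule.starProjection_comp_starProjection_of_le h,
          Submodule.inner_starProjection_left_eq_right]
  have := hb.2 _ hK (S₂.starProjection_apply_mem y)
  rw [S₂.inner_starProjection_left_of_mem y hb.1, real_inner_comm] at this
  exact hby.not_ge this

theorem norm_le_inner_of_mem_innerDualIn {S : Submodule ℝ E} {K : Set E} {e : E} (he : e ∈ S)
    (hK : ∀ x ∈ S, ‖x‖ • e - x ∈ K) {x : E} (hx : x ∈ innerDualIn S K) : ‖x‖ ≤ ⟪x, e⟫ := by
  rw [mem_innerDualIn] at hx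
  have hpos := hx.2 _ (hK x hx.1) (S.sub_mem (S.smul_mem _ he) hx.1)
  rw [inner_sub_left, real_inner_smul_left, real_inner_self_eq_norm_sq, real_inner_comm] at hpos
  rcases (norm_nonneg x).eq_or_lt with hx0 | hx0
  · rw [← hx0, norm_eq_zero.mp hx0.symm, inner_zero_left]
  · nlinarith

theorem norm_smul_sub_mem_innerDual {G : Set E} {e : E} (hG : ∀ g ∈ G, ‖g‖ ≤ ⟪g, e⟫) (x : E) :
    ‖x‖ • e - x ∈ ProperCone.innerDual G := by
  refine ProperCone.mem_innerDual.mpr fun g hg => ?_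
  rw [inner_sub_right, real_inner_smul_right]
  nlinarith [hG g hg, real_inner_le_norm g x, norm_nonneg x]

theorem starProjection_image_innerDualIn_innerDual {S₁ S₂ : Submodule ℝ E} (h : S₂ ≤ S₁)
    {G : Set E} {e : E} (he : e ∈ S₂) (hG : ∀ g ∈ G, ‖g‖ ≤ ⟪g, e⟫) :
    S₂.starProjection '' innerDualIn S₁ (ProperCone.innerDual G) =
      innerDualIn S₂ (ProperCone.innerDual G) := by
  refine starProjection_image_innerDualIn h _ ?_
  refine (isClosed_innerDualIn S₁ _).image_of_norm_le S₂.starProjection.continuous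
    (g := fun y => ⟪y, e⟫) (continuous_id.inner continuous_const) fun x hx => ?_
  rw [S₂.inner_starProjection_left_of_mem x he]
  exact norm_le_inner_of_mem_innerDualIn (h he) (fun y _ => norm_smul_sub_mem_innerDual hG y) hx

end Cones

section Frobenius
variable {ι : Type*}

noncomputable def toFrobeniusSpace : Matrix ι ι ℂ ≃ₗ[ℝ] EuclideanSpace ℂ (ι × ι) where
  toFun A := WithLp.toLp 2 fun p => A p.1 p.2
  invFun x := Matrix.of fun i j => x (i, j)
  map_add' _ _ := rfl
  map_smul' _ _ := rfl
  left_inv _ := rfl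
  right_inv _ := rfl

local notation "φ" => toFrobeniusSpace

@[simp]
theorem toFrobeniusSpace_apply (A : Matrix ι ι ℂ) (p : ι × ι) : φ A p = A p.1 p.2 :=
  rfl

noncomputable def hermitianSubspace (R : Submodule ℝ (Matrix ι ι ℂ)) :
    Submodule ℝ (EuclideanSpace ℂ (ι × ι)) :=
  (R ⊓ selfAdjoint.submodule ℝ (Matrix ι ι ℂ)).map toFrobeniusSpace.toLinearMap

theorem toFrobeniusSpace_mem_hermitianSubspace {R : Submodule ℝ (Matrix ι ι ℂ)}
    {A : Matrix ι ι ℂ} : φ A ∈ hermitianSubspace R ↔ A ∈ R ∧ Aᴴ = A := by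
  rw [hermitianSubspace, Submodule.mem_map_equiv, LinearEquiv.symm_apply_apply,
    Submodule.mem_inf]
  rfl

theorem hermitianSubspace_mono {R₁ R₂ : Submodule ℝ (Matrix ι ι ℂ)} (h : R₂ ≤ R₁) :
    hermitianSubspace R₂ ≤ hermitianSubspace R₁ :=
  Submodule.map_mono (inf_le_inf_right _ h)

variable [Fintype ι]

theorem inner_toFrobeniusSpace (A B : Matrix ι ι ℂ) : ⟪φ A, φ B⟫ = (Aᴴ * B).trace.re := by
  simp only [PiLp.inner_apply, Complex.inner, Fintype.sum_prod_type, toFrobeniusSpace_apply, trace,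
    diag_apply, mul_apply, conjTranspose_apply, Complex.re_sum, RCLike.star_def, mul_comm]
  exact Finset.sum_comm

theorem inner_toFrobeniusSpace_vecMulVec (v : ι → ℂ) (A : Matrix ι ι ℂ) :
    ⟪φ (vecMulVec v (star v)), φ A⟫ = (star v ⬝ᵥ A *ᵥ v).re := by
  rw [inner_toFrobeniusSpace, conjTranspose_vecMulVec, star_star, vecMulVec_mul, trace_vecMulVec,
    dotProduct_comm, dotProduct_mulVec]

variable (ι) in
/-- Matrices `A` with `0 ≤ Re (v* A v)` for all `v`; on hermitian matrices this is positive
semidefiniteness. Writing it as a dual cone makes it closed and gives the bipolar theorem. -/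
noncomputable def accretiveCone : ProperCone ℝ (EuclideanSpace ℂ (ι × ι)) :=
  ProperCone.innerDual (range fun v : ι → ℂ => φ (vecMulVec v (star v)))

theorem toFrobeniusSpace_mem_accretiveCone_iff {A : Matrix ι ι ℂ} (hA : A.IsHermitian) :
    φ A ∈ accretiveCone ι ↔ A.PosSemidef := by
  simp only [accretiveCone, ProperCone.mem_innerDual, forall_mem_range,
    inner_toFrobeniusSpace_vecMulVec, posSemidef_iff_dotProduct_mulVec, hA, true_and,
    Complex.nonneg_iff]
  exact forall_congr' fun v =>
    ⟨fun h => ⟨h, (hA.im_star_dotProduct_mulVec_self v).symm⟩, And.left⟩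

theorem norm_toFrobeniusSpace_vecMulVec_le [DecidableEq ι] (v : ι → ℂ) :
    ‖φ (vecMulVec v (star v))‖ ≤ ⟪φ (vecMulVec v (star v)), φ 1⟫ := by
  obtain ⟨hre, him⟩ := Complex.nonneg_iff.mp (dotProduct_star_self_nonneg v)
  have hsq : ‖φ (vecMulVec v (star v))‖ ^ 2 = (star v ⬝ᵥ v).re ^ 2 := by
    rw [← real_inner_self_eq_norm_sq, inner_toFrobeniusSpace, conjTranspose_vecMulVec, star_star,
      vecMulVec_mul_vecMulVec, trace_vecMulVec, dotProduct_smul, dotProduct_comm v, smul_eq_mul,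
      Complex.mul_re, ← him]
    ring
  rw [inner_toFrobeniusSpace_vecMulVec, one_mulVec]
  nlinarith [norm_nonneg (φ (vecMulVec v (star v)))]

theorem im_trace_eq_zero {X : Matrix ι ι ℂ} (hX : Xᴴ = X) : X.trace.im = 0 :=
  Complex.conj_eq_iff_im.mp (by rw [← RCLike.star_def, ← trace_conjTranspose, hX])

theorem trace_eq_of_re_trace_eq {X Y : Matrix ι ι ℂ} (hX : Xᴴ = X) (hY : Yᴴ = Y)
    (h : X.trace.re = Y.trace.re) : X.trace = Y.trace :=
  Complex.ext h (by rw [im_trace_eq_zero hX, im_trace_eq_zero hY])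

theorem starProjection_hermitianSubspace {R : Submodule ℝ (Matrix ι ι ℂ)} {X Y : Matrix ι ι ℂ}
    (hX : Xᴴ = X) (hY : Y ∈ R) (hYh : Yᴴ = Y)
    (horth : ∀ B ∈ R, Bᴴ = B → ((X - Y) * B).trace.re = 0) :
    (hermitianSubspace R).starProjection (φ X) = φ Y := by
  refine Submodule.eq_starProjection_of_mem_of_inner_eq_zero
    (toFrobeniusSpace_mem_hermitianSubspace.mpr ⟨hY, hYh⟩) fun w hw => ?_
  obtain ⟨B, rfl⟩ := toFrobeniusSpace.surjective w
  obtain ⟨hBR, hBh⟩ := toFrobeniusSpace_mem_hermitianSubspace.mp hw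
  rw [← map_sub, inner_toFrobeniusSpace, conjTranspose_sub, hX, hYh]
  exact horth B hBR hBh

theorem dualCone_eq_preimage (n : ℕ) (R : Submodule ℝ (Matrix (Fin n) (Fin n) ℂ)) :
    dualCone n (R : Set (Matrix (Fin n) (Fin n) ℂ)) =
      φ ⁻¹' (innerDualIn (hermitianSubspace R) (accretiveCone (Fin n)) : Set _) := by
  ext A
  rw [mem_preimage, SetLike.mem_coe, mem_innerDualIn, toFrobeniusSpace.surjective.forall,
    toFrobeniusSpace_mem_hermitianSubspace, and_assoc]
  refine and_congr_right fun _ => and_congr_right fun _ => forall_congr' fun B => ?_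
  rw [toFrobeniusSpace_mem_hermitianSubspace, inner_toFrobeniusSpace, trace_mul_comm]
  refine ⟨fun h hB ⟨hBR, hBh⟩ => ?_, fun h hBR hB => ?_⟩
  · rw [hBh]
    exact h hBR ((toFrobeniusSpace_mem_accretiveCone_iff hBh).mp hB)
  · simpa [hB.1.eq] using h ((toFrobeniusSpace_mem_accretiveCone_iff hB.1).mpr hB) ⟨hBR, hB.1⟩

theorem starProjection_image_innerDualIn_accretiveCone [DecidableEq ι]
    {R₁ R₂ : Submodule ℝ (Matrix ι ι ℂ)} (h : R₂ ≤ R₁) (h1 : 1 ∈ R₂) :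
    (hermitianSubspace R₂).starProjection '' innerDualIn (hermitianSubspace R₁) (accretiveCone ι) =
      innerDualIn (hermitianSubspace R₂) (accretiveCone ι) :=
  starProjection_image_innerDualIn_innerDual (hermitianSubspace_mono h)
    (toFrobeniusSpace_mem_hermitianSubspace.mpr ⟨h1, conjTranspose_one⟩)
    (forall_mem_range.mpr norm_toFrobeniusSpace_vecMulVec_le)

theorem image_dualCone {n : ℕ} {R₁ R₂ : Submodule ℝ (Matrix (Fin n) (Fin n) ℂ)} (h : R₂ ≤ R₁)
    (h1 : 1 ∈ R₂) :
    (toFrobeniusSpace.symm ∘ (hermitianSubspace R₂).starProjection ∘ φ) '' dualCone n R₁ =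
      dualCone n R₂ := by
  rw [image_comp, image_comp, dualCone_eq_preimage, dualCone_eq_preimage,
    image_preimage_eq _ toFrobeniusSpace.surjective,
    starProjection_image_innerDualIn_accretiveCone h h1, LinearEquiv.image_symm_eq_preimage]

end Frobenius

theorem dualCone_dmat_projection_general (n : ℕ)
    (R₁ R₂ : Submodule ℝ (Matrix (Fin n) (Fin n) ℂ))
    (h21 : (R₂ : Set (Matrix (Fin n) (Fin n) ℂ)) ⊆ R₁)
    (h1R₂ : (1 : Matrix (Fin n) (Fin n) ℂ) ∈ R₂)
    (π : Matrix (Fin n) (Fin n) ℂ → Matrix (Fin n) (Fin n) ℂ)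
    (hπmem : ∀ A, A ∈ R₁ → Aᴴ = A → π A ∈ R₂ ∧ (π A)ᴴ = π A)
    (hπorth : ∀ A, A ∈ R₁ → Aᴴ = A →
      ∀ B ∈ R₂, Bᴴ = B → (((A - π A) * B).trace).re = 0) :
    π '' dualCone n (R₁ : Set (Matrix (Fin n) (Fin n) ℂ)) =
      dualCone n (R₂ : Set (Matrix (Fin n) (Fin n) ℂ)) ∧
    π '' dmat n (R₁ : Set (Matrix (Fin n) (Fin n) ℂ)) =
      dmat n (R₂ : Set (Matrix (Fin n) (Fin n) ℂ)) := by
  have hcone : π '' dualCone n R₁ = dualCone n R₂ := by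
    refine Eq.trans (EqOn.image_eq fun X hX => ?_) (image_dualCone h21 h1R₂)
    obtain ⟨hXR, hXh, -⟩ := hX
    obtain ⟨hπR, hπh⟩ := hπmem X hXR hXh
    simp [starProjection_hermitianSubspace hXh hπR hπh (hπorth X hXR hXh)]
  have htrace : ∀ X ∈ dualCone n R₁, (π X).trace = X.trace := by
    rintro X ⟨hXR, hXh, -⟩
    have hπh := (hπmem X hXR hXh).2
    have hre := hπorth X hXR hXh 1 h1R₂ conjTranspose_one
    rw [mul_one, trace_sub, Complex.sub_re, sub_eq_zero] at hre
    exact trace_eq_of_re_trace_eq hπh hXh hre.symm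
  have hdmat : dmat n R₁ = dualCone n R₁ ∩ π ⁻¹' {Y | Y.trace = 1} := by
    ext X
    exact and_congr_right fun hX => by rw [mem_preimage, mem_ofPred_eq, htrace X hX]
  refine ⟨hcone, ?_⟩
  rw [hdmat, image_inter_preimage, hcone]
  rfl

/-- For nested real matrix systems `R₂ ⊆ R₁` on `ℂ^n`, the orthogonal projection
`π : H(R₁) → H(R₂)` satisfies `π(C(R₁)^∨) = C(R₂)^∨` and `π(D(R₁)) = D(R₂)`. -/
theorem dualCone_dmat_projection (n : ℕ)
    (R₁ R₂ : Submodule ℝ (Matrix (Fin n) (Fin n) ℂ))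
    (h21 : (R₂ : Set (Matrix (Fin n) (Fin n) ℂ)) ⊆ R₁)
    (h1R₁ : (1 : Matrix (Fin n) (Fin n) ℂ) ∈ R₁)
    (hstar₁ : ∀ A ∈ R₁, Aᴴ ∈ R₁)
    (h1R₂ : (1 : Matrix (Fin n) (Fin n) ℂ) ∈ R₂)
    (hstar₂ : ∀ A ∈ R₂, Aᴴ ∈ R₂)
    (π : Matrix (Fin n) (Fin n) ℂ → Matrix (Fin n) (Fin n) ℂ)
    (hπmem : ∀ A, A ∈ R₁ → Aᴴ = A → π A ∈ R₂ ∧ (π A)ᴴ = π A)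
    (hπorth : ∀ A, A ∈ R₁ → Aᴴ = A →
      ∀ B ∈ R₂, Bᴴ = B → (((A - π A) * B).trace).re = 0) :
    π '' dualCone n (R₁ : Set (Matrix (Fin n) (Fin n) ℂ)) =
      dualCone n (R₂ : Set (Matrix (Fin n) (Fin n) ℂ)) ∧
    π '' dmat n (R₁ : Set (Matrix (Fin n) (Fin n) ℂ)) =
      dmat n (R₂ : Set (Matrix (Fin n) (Fin n) ℂ)) :=
  dualCone_dmat_projection_general n R₁ R₂ h21 h1R₂ π hπmem hπorth
end

section
/- Let R be a real matrix system on ℂ^n whose set of density matrices D(R) is stable and invariant under an orthogonal transformation γ : R → R generating a finite cyclic group, and let A = {A ∈ R : γ(A) = A} be a real *-subalgebra of M_n. Then the orthogonal projection D(R) → D(A) is open. -/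
open Matrix ComplexOrder

/-- `f` is an open map from the subspace `S` onto the subspace `T`. -/
def RelOpenMap {X Y : Type*} [TopologicalSpace X] [TopologicalSpace Y]
    (f : X → Y) (S : Set X) (T : Set Y) : Prop :=
  ∀ U : Set X, IsOpen U → ∃ V : Set Y, IsOpen V ∧ f '' (U ∩ S) = V ∩ T

/-!
On `D(R)` the orthogonal projection is the orbit average `P = k⁻¹ ∑_{e<k} γ^e`: `P z` is fixed
by `γ`, and `z - P z` is trace-orthogonal to every hermitian fixed point `B` because `γ` is
orthogonal and fixes `B`.

Openness at `x ∈ D(R)`: by stability the dyadic averaging maps `D(R)^(2^m) → D(R)` are relatively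
open. Take a multiple `L` of `k` with `L < 2^m` and `(2^m - L) / 2^m` small, and feed the averaging
map the orbit points `γ^i x` (`i < L`) followed by `2^m - L` copies of `P x`; their average is
`P x`. A fixed density matrix `y` near `P x` is then an average of density matrices `u_i` near
these points. Moving `u_i` back by `γ^(L-i)` for `i < L` gives points near `x`, whose average `ρ`
is close to `x` and satisfies `P ρ = P y = y`. Finally `D(A) ⊆ D(R)`, since the dual cone of a
real unital subalgebra consists of positive semidefinite matrices.
-/

open Finset Topology

lemma relOpenMap_of_forall_exists {X Y : Type*} [TopologicalSpace X] [TopologicalSpace Y]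
    {f : X → Y} {S : Set X} {T : Set Y} (hf : Set.MapsTo f S T)
    (h : ∀ U, IsOpen U → ∀ x ∈ U ∩ S, ∃ W, IsOpen W ∧ f x ∈ W ∧ W ∩ T ⊆ f '' (U ∩ S)) :
    RelOpenMap f S T := by
  intro U hU
  choose W hW hxW hWT using h U hU
  refine ⟨⋃ (x) (hx : x ∈ U ∩ S), W x hx, isOpen_iUnion fun x => isOpen_iUnion (hW x), ?_⟩
  apply Set.Subset.antisymm
  · rintro _ ⟨x, hx, rfl⟩
    exact ⟨Set.mem_iUnion₂.mpr ⟨x, hx, hxW x hx⟩, hf hx.2⟩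
  · rintro y ⟨hy, hyT⟩
    obtain ⟨x, hx, hyx⟩ := Set.mem_iUnion₂.mp hy
    exact hWT x hx ⟨hyx, hyT⟩

section Convex

variable {M : Type*} [AddCommGroup M] [Module ℝ M]

lemma Convex.inv_card_smul_sum_mem {ι : Type*} {s : Set M} (hs : Convex ℝ s) {t : Finset ι}
    (ht : t.Nonempty) {w : ι → M} (hw : ∀ i ∈ t, w i ∈ s) :
    (#t : ℝ)⁻¹ • ∑ i ∈ t, w i ∈ s := by
  rw [smul_sum]
  refine hs.sum_mem (fun _ _ => by positivity) ?_ hw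
  rw [sum_const, nsmul_eq_mul, mul_inv_cancel₀ (by exact_mod_cast ht.card_pos.ne')]

variable [TopologicalSpace M] [IsTopologicalAddGroup M] [ContinuousSMul ℝ M]
  [LocallyConvexSpace ℝ M]

lemma exists_isOpen_convex_mem_subset {U : Set M} {x : M} (hU : U ∈ 𝓝 x) :
    ∃ B, IsOpen B ∧ Convex ℝ B ∧ x ∈ B ∧ B ⊆ U := by
  obtain ⟨S, ⟨hS, hSc⟩, hSU⟩ := (LocallyConvexSpace.convex_basis (𝕜 := ℝ) x).mem_iff.mp hU
  exact ⟨interior S, isOpen_interior, hSc.interior, mem_interior_iff_mem_nhds.mpr hS,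
    interior_subset.trans hSU⟩

lemma exists_convex_nhds_combination_mem {U : Set M} {x : M} (hU : U ∈ 𝓝 x) (p : M) :
    ∃ a > 0, ∃ B V : Set M, IsOpen B ∧ Convex ℝ B ∧ x ∈ B ∧ IsOpen V ∧ Convex ℝ V ∧ p ∈ V ∧
      ∀ t : ℝ, 0 ≤ t → t < a → ∀ b ∈ B, ∀ v ∈ V, (1 - t) • b + t • v ∈ U := by
  have hG : Continuous fun s : ℝ × M × M => (1 - s.1) • s.2.1 + s.1 • s.2.2 := by fun_prop
  have hGU : (fun s : ℝ × M × M => (1 - s.1) • s.2.1 + s.1 • s.2.2) ⁻¹' U ∈ 𝓝 (0, x, p) :=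
    hG.continuousAt.preimage_mem_nhds (by simpa using hU)
  obtain ⟨I, hI, P, hP, hIP⟩ := mem_nhds_prod_iff.mp hGU
  obtain ⟨B₁, hB₁, V₁, hV₁, hBV⟩ := mem_nhds_prod_iff.mp hP
  obtain ⟨a, ha, haI⟩ := Metric.mem_nhds_iff.mp hI
  obtain ⟨B, hB, hBc, hxB, hBB₁⟩ := exists_isOpen_convex_mem_subset hB₁
  obtain ⟨V, hV, hVc, hpV, hVV₁⟩ := exists_isOpen_convex_mem_subset hV₁
  refine ⟨a, ha, B, V, hB, hBc, hxB, hV, hVc, hpV, fun t ht0 hta b hb v hv => ?_⟩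
  have ht : t ∈ I := haI <| by
    rwa [Metric.mem_ball, Real.dist_eq, sub_zero, abs_of_nonneg ht0]
  exact hIP (Set.mk_mem_prod ht (hBV (Set.mk_mem_prod (hBB₁ hb) (hVV₁ hv))))

end Convex

section Dyadic

variable {M : Type*} [AddCommGroup M] [Module ℝ M]

def IsMidpointOpen [TopologicalSpace M] (D : Set M) : Prop :=
  ∀ U V : Set M, IsOpen U → IsOpen V → ∃ W : Set M, IsOpen W ∧
    {z | ∃ x ∈ U ∩ D, ∃ y ∈ V ∩ D, z = (2⁻¹ : ℝ) • (x + y)} = W ∩ D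

def dyadicAverages (D : Set M) (O : ℕ → Set M) (m : ℕ) : Set M :=
  {z | ∃ u : ℕ → M, (∀ i < 2 ^ m, u i ∈ O i ∩ D) ∧
    z = ((2 : ℝ) ^ m)⁻¹ • ∑ i ∈ range (2 ^ m), u i}

lemma dyadicAverages_zero (D : Set M) (O : ℕ → Set M) : dyadicAverages D O 0 = O 0 ∩ D := by
  ext z
  constructor
  · rintro ⟨u, hu, rfl⟩
    simpa using hu 0 one_pos
  · intro hz
    exact ⟨fun _ => z, fun i hi => by rwa [Nat.lt_one_iff.mp hi], by simp⟩

lemma two_pow_succ_inv_smul_sum (u : ℕ → M) (m : ℕ) :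
    ((2 : ℝ) ^ (m + 1))⁻¹ • ∑ i ∈ range (2 ^ (m + 1)), u i =
      (2⁻¹ : ℝ) • (((2 : ℝ) ^ m)⁻¹ • ∑ i ∈ range (2 ^ m), u i +
        ((2 : ℝ) ^ m)⁻¹ • ∑ i ∈ range (2 ^ m), u (2 ^ m + i)) := by
  rw [show 2 ^ (m + 1) = 2 ^ m + 2 ^ m by omega, sum_range_add, smul_add, smul_add, smul_smul,
    smul_smul, ← mul_inv, pow_succ, mul_comm]

lemma dyadicAverages_succ (D : Set M) (O : ℕ → Set M) (m : ℕ) :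
    dyadicAverages D O (m + 1) =
      {z | ∃ x ∈ dyadicAverages D O m, ∃ y ∈ dyadicAverages D (fun i => O (2 ^ m + i)) m,
        z = (2⁻¹ : ℝ) • (x + y)} := by
  ext z
  constructor
  · rintro ⟨u, hu, rfl⟩
    exact ⟨_, ⟨u, fun i hi => hu i (by omega), rfl⟩,
      _, ⟨fun i => u (2 ^ m + i), fun i hi => hu _ (by omega), rfl⟩,
      two_pow_succ_inv_smul_sum u m⟩
  · rintro ⟨_, ⟨u, hu, rfl⟩, _, ⟨v, hv, rfl⟩, rfl⟩
    refine ⟨fun i => if i < 2 ^ m then u i else v (i - 2 ^ m), fun i hi => ?_, ?_⟩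
    · by_cases h : i < 2 ^ m
      · simpa only [if_pos h] using hu i h
      · simpa only [if_neg h, Nat.add_sub_cancel' (not_lt.mp h)] using hv (i - 2 ^ m) (by omega)
    · rw [two_pow_succ_inv_smul_sum]
      congr 3
      · exact sum_congr rfl fun i hi => (if_pos (mem_range.mp hi)).symm
      · exact sum_congr rfl fun i _ => by simp

variable [TopologicalSpace M]

lemma IsMidpointOpen.exists_isOpen_dyadicAverages_eq {D : Set M} (hD : IsMidpointOpen D)
    (m : ℕ) (O : ℕ → Set M) (hO : ∀ i, IsOpen (O i)) :
    ∃ W, IsOpen W ∧ dyadicAverages D O m = W ∩ D := by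
  induction m generalizing O with
  | zero => exact ⟨O 0, hO 0, dyadicAverages_zero D O⟩
  | succ m ih =>
    obtain ⟨W₁, hW₁, h₁⟩ := ih O hO
    obtain ⟨W₂, hW₂, h₂⟩ := ih _ fun i => hO (2 ^ m + i)
    rw [dyadicAverages_succ, h₁, h₂]
    exact hD W₁ W₂ hW₁ hW₂

end Dyadic

lemma Module.End.mapsTo_pow {M : Type*} [AddCommGroup M] [Module ℝ M] {γ : Module.End ℝ M}
    {D : Set M} (hγD : Set.MapsTo γ D D) (j : ℕ) : Set.MapsTo (γ ^ j) D D := by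
  rw [Module.End.coe_pow]
  exact hγD.iterate j

section OrbitAverage

variable {M : Type*} [AddCommGroup M] [Module ℝ M] (γ : Module.End ℝ M) (k : ℕ)

noncomputable def orbitAverage : Module.End ℝ M := (k : ℝ)⁻¹ • ∑ e ∈ range k, γ ^ e

variable {γ k}

lemma orbitAverage_apply (x : M) :
    orbitAverage γ k x = (k : ℝ)⁻¹ • ∑ e ∈ range k, (γ ^ e) x := by
  simp [orbitAverage]

lemma orbitAverage_apply_of_apply_eq (hk : k ≠ 0) {y : M} (hy : γ y = y) :
    orbitAverage γ k y = y := by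
  have hpow : ∀ e, (γ ^ e) y = y := fun e => by
    rw [Module.End.coe_pow]; exact Function.iterate_fixed hy e
  rw [orbitAverage_apply, sum_congr rfl fun e _ => hpow e, sum_const, card_range,
    ← Nat.cast_smul_eq_nsmul ℝ, smul_smul, inv_mul_cancel₀ (by exact_mod_cast hk), one_smul]

lemma pow_apply_of_dvd {x : M} (hx : (γ ^ k) x = x) {L : ℕ} (hL : k ∣ L) : (γ ^ L) x = x := by
  obtain ⟨q, rfl⟩ := hL
  rw [pow_mul, Module.End.coe_pow]
  exact Function.iterate_fixed hx q

lemma orbitAverage_apply_apply {x : M} (hx : (γ ^ k) x = x) :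
    orbitAverage γ k (γ x) = orbitAverage γ k x := by
  have hshift : ∑ e ∈ range k, (γ ^ e) (γ x) = ∑ e ∈ range k, (γ ^ e) x := by
    have h := sum_range_succ' (fun e => (γ ^ e) x) k
    rw [sum_range_succ, hx, pow_zero, Module.End.one_apply, add_left_inj] at h
    simpa only [pow_succ, Module.End.mul_apply] using h.symm
  rw [orbitAverage_apply, orbitAverage_apply, hshift]

lemma orbitAverage_pow_apply {x : M} (hx : (γ ^ k) x = x) (c : ℕ) :
    orbitAverage γ k ((γ ^ c) x) = orbitAverage γ k x := by
  induction c with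
  | zero => rw [pow_zero, Module.End.one_apply]
  | succ c ih =>
    have hcx : (γ ^ k) ((γ ^ c) x) = (γ ^ c) x := by
      rw [← Module.End.mul_apply, ← pow_add, add_comm, pow_add, Module.End.mul_apply, hx]
    rw [pow_succ', Module.End.mul_apply, orbitAverage_apply_apply hcx, ih]

lemma apply_orbitAverage {x : M} (hx : (γ ^ k) x = x) :
    γ (orbitAverage γ k x) = orbitAverage γ k x := by
  have hcomm : γ * orbitAverage γ k = orbitAverage γ k * γ := by
    simp only [orbitAverage, mul_smul_comm, smul_mul_assoc, mul_sum, sum_mul, ← pow_succ,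
      ← pow_succ']
  rw [← Module.End.mul_apply, hcomm, Module.End.mul_apply, orbitAverage_apply_apply hx]

lemma sum_range_pow_apply_of_dvd {x : M} (hx : (γ ^ k) x = x) {L : ℕ} (hL : k ∣ L) :
    ∑ i ∈ range L, (γ ^ i) x = (L : ℝ) • orbitAverage γ k x := by
  obtain ⟨q, rfl⟩ := hL
  rcases eq_or_ne k 0 with rfl | hk
  · simp
  have horbit : ∑ i ∈ range k, (γ ^ i) x = (k : ℝ) • orbitAverage γ k x := by
    rw [orbitAverage_apply, smul_smul, mul_inv_cancel₀ (by exact_mod_cast hk), one_smul]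
  induction q with
  | zero => simp
  | succ q ih =>
    have hperiod : ∀ i, (γ ^ (k * q + i)) x = (γ ^ i) x := fun i => by
      rw [add_comm, pow_add, Module.End.mul_apply, pow_apply_of_dvd hx (dvd_mul_right k q)]
    rw [mul_add_one, sum_range_add, ih, sum_congr rfl fun i _ => hperiod i, horbit, ← add_smul]
    push_cast
    ring_nf

lemma Convex.orbitAverage_mem {D : Set M} (hD : Convex ℝ D) (hγD : Set.MapsTo γ D D) (hk : k ≠ 0)
    {x : M} (hx : x ∈ D) : orbitAverage γ k x ∈ D := by
  rw [orbitAverage_apply]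
  simpa using hD.inv_card_smul_sum_mem (nonempty_range_iff.mpr hk)
    fun e _ => Module.End.mapsTo_pow hγD e hx

end OrbitAverage

lemma exists_dvd_lt_two_pow {k : ℕ} (hk : k ≠ 0) {a : ℝ} (ha : 0 < a) :
    ∃ m L : ℕ, k ∣ L ∧ 0 < L ∧ L < 2 ^ m ∧ ((2 ^ m - L : ℕ) : ℝ) / (2 ^ m : ℕ) < a := by
  obtain ⟨m, hm⟩ := pow_unbounded_of_one_lt ((k : ℝ) / a + k) one_lt_two
  have hka_nonneg : (0 : ℝ) ≤ k / a := by positivity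
  have hkm : k < 2 ^ m := by exact_mod_cast (by linarith : (k : ℝ) < 2 ^ m)
  have hka : (k : ℝ) / (2 ^ m : ℕ) < a := by
    rw [div_lt_iff₀ (by positivity), ← div_lt_iff₀' ha]; push_cast; linarith
  refine ⟨m, ?_⟩
  generalize 2 ^ m = N at hkm hka ⊢
  set q := (N - 1) / k
  have hq : 1 ≤ q := (Nat.one_le_div_iff (Nat.pos_of_ne_zero hk)).mpr (by omega)
  have hdiv : k * q + (N - 1) % k = N - 1 := Nat.div_add_mod (N - 1) k
  have hmod := Nat.mod_lt (N - 1) (Nat.pos_of_ne_zero hk)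
  have hkq : k ≤ k * q := Nat.le_mul_of_pos_right k hq
  refine ⟨k * q, dvd_mul_right k q, by omega, by omega, lt_of_le_of_lt ?_ hka⟩
  gcongr
  exact_mod_cast (by omega : N - k * q ≤ k)

lemma inv_smul_sum_range_eq_combination {M : Type*} [AddCommGroup M] [Module ℝ M]
    (w : ℕ → M) {L N : ℕ} (hL : 0 < L) (hLN : L < N) :
    (N : ℝ)⁻¹ • ∑ i ∈ range N, w i =
      (1 - ((N - L : ℕ) : ℝ) / N) • ((L : ℝ)⁻¹ • ∑ i ∈ range L, w i) +
        (((N - L : ℕ) : ℝ) / N) • (((N - L : ℕ) : ℝ)⁻¹ • ∑ i ∈ Finset.Ico L N, w i) := by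
  have hL' : (L : ℝ) ≠ 0 := by exact_mod_cast hL.ne'
  have hNL : ((N - L : ℕ) : ℝ) ≠ 0 := by exact_mod_cast (Nat.sub_pos_of_lt hLN).ne'
  have hN : (N : ℝ) ≠ 0 := by exact_mod_cast (hL.trans hLN).ne'
  rw [← sum_range_add_sum_Ico _ hLN.le, smul_add, smul_smul, smul_smul]
  congr 2
  · rw [Nat.cast_sub hLN.le]
    field_simp
    ring
  · field_simp

section Projection

variable {M : Type*} [AddCommGroup M] [Module ℝ M] {γ : Module.End ℝ M} {k : ℕ}

def orbitSlots (γ : Module.End ℝ M) (L : ℕ) (B V : Set M) (i : ℕ) : Set M :=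
  if i < L then (γ ^ (L - i)) ⁻¹' B else V

lemma orbitAverage_mem_dyadicAverages {D : Set M} (hD : Convex ℝ D) (hγD : Set.MapsTo γ D D)
    (hk : k ≠ 0) {x : M} (hxD : x ∈ D) (hx : (γ ^ k) x = x) {L m : ℕ} (hkL : k ∣ L)
    (hLN : L ≤ 2 ^ m) {B V : Set M} (hxB : x ∈ B) (hxV : orbitAverage γ k x ∈ V) :
    orbitAverage γ k x ∈ dyadicAverages D (orbitSlots γ L B V) m := by
  refine ⟨fun i => if i < L then (γ ^ i) x else orbitAverage γ k x, fun i _ => ?_, ?_⟩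
  · by_cases h : i < L
    · simp only [orbitSlots, if_pos h, Set.mem_inter_iff, Set.mem_preimage]
      rw [← Module.End.mul_apply, ← pow_add, Nat.sub_add_cancel h.le, pow_apply_of_dvd hx hkL]
      exact ⟨hxB, Module.End.mapsTo_pow hγD i hxD⟩
    · simp only [orbitSlots, if_neg h]
      exact ⟨hxV, hD.orbitAverage_mem hγD hk hxD⟩
  · rw [← sum_range_add_sum_Ico _ hLN, sum_congr rfl fun i hi => if_pos (mem_range.mp hi),
      sum_congr rfl fun i hi => if_neg (not_lt.mpr (Finset.mem_Ico.mp hi).1),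
      sum_range_pow_apply_of_dvd hx hkL, sum_const, Nat.card_Ico, ← Nat.cast_smul_eq_nsmul ℝ,
      ← add_smul, smul_smul, Nat.cast_sub hLN, add_sub_cancel, Nat.cast_pow, Nat.cast_ofNat,
      inv_mul_cancel₀ (by positivity), one_smul]

lemma mem_image_orbitAverage_of_mem_dyadicAverages {D : Set M} (hD : Convex ℝ D)
    (hγD : Set.MapsTo γ D D) (hk : k ≠ 0) (hγk : ∀ z ∈ D, (γ ^ k) z = z) {L m : ℕ} (hL : 0 < L)
    (hLN : L < 2 ^ m) {B V U : Set M} (hB : Convex ℝ B) (hV : Convex ℝ V)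
    (hBVU : ∀ b ∈ B, ∀ v ∈ V,
      (1 - ((2 ^ m - L : ℕ) : ℝ) / (2 ^ m : ℕ)) • b + (((2 ^ m - L : ℕ) : ℝ) / (2 ^ m : ℕ)) • v ∈ U)
    {y : M} (hy : y ∈ dyadicAverages D (orbitSlots γ L B V) m) (hyγ : γ y = y) :
    y ∈ orbitAverage γ k '' (U ∩ D) := by
  obtain ⟨u, hu, rfl⟩ := hy
  set w : ℕ → M := fun i => if i < L then (γ ^ (L - i)) (u i) else u i
  have hwD : ∀ i < 2 ^ m, w i ∈ D := fun i hi => by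
    by_cases h : i < L
    · simpa only [w, if_pos h] using Module.End.mapsTo_pow hγD _ (hu i hi).2
    · simpa only [w, if_neg h] using (hu i hi).2
  have hwu : ∀ i < 2 ^ m, orbitAverage γ k (w i) = orbitAverage γ k (u i) := fun i hi => by
    by_cases h : i < L
    · simp only [w, if_pos h, orbitAverage_pow_apply (hγk _ (hu i hi).2)]
    · simp only [w, if_neg h]
  have hwB : ∀ i ∈ range L, w i ∈ B := fun i hi => by
    have h := mem_range.mp hi
    simpa only [w, if_pos h, orbitSlots, Set.mem_preimage] using (hu i (h.trans hLN)).1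
  have hwV : ∀ i ∈ Finset.Ico L (2 ^ m), w i ∈ V := fun i hi => by
    have h := Finset.mem_Ico.mp hi
    simpa only [w, if_neg (not_lt.mpr h.1), orbitSlots] using (hu i h.2).1
  refine ⟨((2 ^ m : ℕ) : ℝ)⁻¹ • ∑ i ∈ range (2 ^ m), w i, ⟨?_, ?_⟩, ?_⟩
  · rw [inv_smul_sum_range_eq_combination w hL hLN]
    refine hBVU _ ?_ _ ?_
    · simpa using hB.inv_card_smul_sum_mem (nonempty_range_iff.mpr hL.ne') hwB
    · simpa using hV.inv_card_smul_sum_mem (nonempty_Ico.mpr hLN) hwV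
  · simpa using hD.inv_card_smul_sum_mem (nonempty_range_iff.mpr (by positivity)) fun i hi =>
      hwD i (mem_range.mp hi)
  · rw [map_smul, map_sum, sum_congr rfl fun i hi => hwu i (mem_range.mp hi), ← map_sum,
      ← map_smul, Nat.cast_pow, Nat.cast_ofNat]
    exact orbitAverage_apply_of_apply_eq hk hyγ

theorem IsMidpointOpen.exists_isOpen_orbitAverage_mem [TopologicalSpace M]
    [IsTopologicalAddGroup M] [ContinuousSMul ℝ M] [LocallyConvexSpace ℝ M] {D : Set M}
    (hstable : IsMidpointOpen D) (hD : Convex ℝ D) (hγ : Continuous γ) (hγD : Set.MapsTo γ D D)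
    (hk : k ≠ 0) (hγk : ∀ z ∈ D, (γ ^ k) z = z) {U : Set M} (hU : IsOpen U) {x : M}
    (hxU : x ∈ U) (hxD : x ∈ D) :
    ∃ W, IsOpen W ∧ orbitAverage γ k x ∈ W ∧
      ∀ y ∈ W ∩ D, γ y = y → y ∈ orbitAverage γ k '' (U ∩ D) := by
  obtain ⟨a, ha, B, V, hB, hBc, hxB, hV, hVc, hxV, hcomb⟩ :=
    exists_convex_nhds_combination_mem (hU.mem_nhds hxU) (orbitAverage γ k x)
  obtain ⟨m, L, hkL, hL, hLN, hsmall⟩ := exists_dvd_lt_two_pow hk ha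
  have hslots : ∀ i, IsOpen (orbitSlots γ L B V i) := fun i => by
    unfold orbitSlots
    split_ifs
    · exact hB.preimage (Module.End.coe_pow γ (L - i) ▸ hγ.iterate (L - i))
    · exact hV
  obtain ⟨W, hW, hWeq⟩ := hstable.exists_isOpen_dyadicAverages_eq m _ hslots
  refine ⟨W, hW, ?_, fun y hy hyγ => ?_⟩
  · have h := orbitAverage_mem_dyadicAverages hD hγD hk hxD (hγk x hxD) hkL hLN.le hxB hxV
    exact (hWeq ▸ h).1
  · exact mem_image_orbitAverage_of_mem_dyadicAverages hD hγD hk hγk hL hLN hBc hVc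
      (hcomb _ (by positivity) hsmall) (hWeq ▸ hy) hyγ

end Projection

namespace Matrix

variable {ι 𝕜 : Type*} [Fintype ι] [RCLike 𝕜]

open scoped MatrixOrder in
lemma PosSemidef.trace_mul_nonneg [DecidableEq ι] {A B : Matrix ι ι 𝕜} (hA : A.PosSemidef)
    (hB : B.PosSemidef) : 0 ≤ (A * B).trace := by
  obtain ⟨C, rfl⟩ := CStarAlgebra.nonneg_iff_eq_star_mul_self.mp hB.nonneg
  rw [← mul_assoc, trace_mul_comm, ← mul_assoc]
  exact (hA.mul_mul_conjTranspose_same C).trace_nonneg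

lemma cfc_mem_of_mem_subalgebra [DecidableEq ι] (S : Subalgebra ℝ (Matrix ι ι 𝕜)) (f : ℝ → ℝ)
    {A : Matrix ι ι 𝕜} (hA : A.IsHermitian) (hAS : A ∈ S) : cfc f A ∈ S := by
  set s := A.finite_real_spectrum.toFinset
  have hf : Set.EqOn f (Lagrange.interpolate s id f).eval (spectrum ℝ A) := fun t ht =>
    (Lagrange.eval_interpolate_at_node f (Set.injOn_id _)
      (A.finite_real_spectrum.mem_toFinset.mpr ht)).symm
  rw [cfc_congr hf, cfc_polynomial _ A hA.isSelfAdjoint]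
  exact Algebra.adjoin_le (Set.singleton_subset_iff.mpr hAS)
    (Polynomial.aeval_mem_adjoin_singleton ℝ A)

lemma re_trace_conjTranspose_mul {A B : Matrix ι ι ℂ} (hB : Bᴴ = B) :
    (Aᴴ * B).trace.re = (A * B).trace.re := by
  rw [← hB, ← conjTranspose_mul, trace_conjTranspose, hB, trace_mul_comm, Complex.star_def,
    Complex.conj_re]

lemma eq_zero_of_re_trace_conjTranspose_mul_self_nonpos {A : Matrix ι ι ℂ}
    (h : (Aᴴ * A).trace.re ≤ 0) : A = 0 := by
  obtain ⟨hre, him⟩ := Complex.nonneg_iff.mp (posSemidef_conjTranspose_mul_self A).trace_nonneg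
  refine trace_conjTranspose_mul_self_eq_zero_iff.mp (Complex.ext ?_ him.symm)
  exact le_antisymm h hre

end Matrix

open scoped MatrixOrder in
lemma posSemidef_of_mem_dualCone {n : ℕ} (S : Subalgebra ℝ (Matrix (Fin n) (Fin n) ℂ))
    {ρ : Matrix (Fin n) (Fin n) ℂ} (hρ : ρ ∈ dualCone n S) : ρ.PosSemidef := by
  -- The negative part `ρ⁻` is a polynomial in `ρ`, hence lies in `S`;
  -- then `0 ≤ Re tr (ρ ρ⁻) = - tr (ρ⁻ᴴ ρ⁻)` forces `ρ⁻ = 0`.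
  obtain ⟨hρS, hρH, hdual⟩ := hρ
  have hNS : ρ⁻ ∈ S := by
    rw [CFC.negPart_def, cfcₙ_eq_cfc]
    exact cfc_mem_of_mem_subalgebra S _ hρH hρS
  have hN : (ρ⁻).PosSemidef := (CFC.negPart_nonneg ρ).posSemidef
  have hρN : ρ * ρ⁻ = -((ρ⁻)ᴴ * ρ⁻) := by
    nth_rewrite 1 [← CFC.posPart_sub_negPart ρ]
    rw [sub_mul, CFC.posPart_mul_negPart, zero_sub, hN.isHermitian.eq]
  have h := hdual _ hNS hN
  rw [hρN, trace_neg, Complex.neg_re, neg_nonneg] at h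
  exact ((CFC.negPart_eq_zero_iff ρ).mp
    (eq_zero_of_re_trace_conjTranspose_mul_self_nonpos h)).posSemidef

lemma dmat_subset_dmat {n : ℕ} (S : Subalgebra ℝ (Matrix (Fin n) (Fin n) ℂ))
    {R : Set (Matrix (Fin n) (Fin n) ℂ)} (hSR : (S : Set (Matrix (Fin n) (Fin n) ℂ)) ⊆ R) :
    dmat n S ⊆ dmat n R := fun _ ⟨hρ, htr⟩ =>
  ⟨⟨hSR hρ.1, hρ.2.1, fun _ _ hB =>
    (Complex.nonneg_iff.mp ((posSemidef_of_mem_dualCone S hρ).trace_mul_nonneg hB)).1⟩, htr⟩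

lemma mem_dmat_of_mem_of_subset {n : ℕ} {A R : Set (Matrix (Fin n) (Fin n) ℂ)} (hAR : A ⊆ R)
    {ρ : Matrix (Fin n) (Fin n) ℂ} (hρ : ρ ∈ dmat n R) (hρA : ρ ∈ A) : ρ ∈ dmat n A :=
  ⟨⟨hρA, hρ.1.2.1, fun B hB => hρ.1.2.2 B (hAR hB)⟩, hρ.2⟩

lemma convex_dmat {n : ℕ} (R : Submodule ℝ (Matrix (Fin n) (Fin n) ℂ)) :
    Convex ℝ (dmat n (R : Set (Matrix (Fin n) (Fin n) ℂ))) := by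
  rintro x ⟨⟨hxR, hxH, hx⟩, hxtr⟩ y ⟨⟨hyR, hyH, hy⟩, hytr⟩ a b ha hb hab
  refine ⟨⟨R.add_mem (R.smul_mem a hxR) (R.smul_mem b hyR), ?_, fun B hB hBpsd => ?_⟩, ?_⟩
  · simp [hxH, hyH]
  · simp only [add_mul, smul_mul, trace_add, trace_smul, Complex.add_re, Complex.real_smul,
      Complex.re_ofReal_mul]
    exact add_nonneg (mul_nonneg ha (hx B hB hBpsd)) (mul_nonneg hb (hy B hB hBpsd))
  · rw [trace_add, trace_smul, trace_smul, hxtr, hytr, ← add_smul, hab, one_smul]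

section FixedPoints

variable {n : ℕ} {R : Submodule ℝ (Matrix (Fin n) (Fin n) ℂ)}
  {γ : Module.End ℝ (Matrix (Fin n) (Fin n) ℂ)} {X B : Matrix (Fin n) (Fin n) ℂ}

lemma re_trace_apply_mul_of_apply_eq
    (hγorth : ∀ X ∈ R, ∀ Y ∈ R, (((γ X)ᴴ * γ Y).trace).re = ((Xᴴ * Y).trace).re)
    (hX : X ∈ R) (hB : B ∈ R) (hγB : γ B = B) (hBH : Bᴴ = B) :
    (γ X * B).trace.re = (X * B).trace.re := by
  rw [← re_trace_conjTranspose_mul (A := γ X) hBH, ← re_trace_conjTranspose_mul (A := X) hBH]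
  nth_rewrite 1 [← hγB]
  exact hγorth X hX B hB

lemma re_trace_orbitAverage_mul (hγR : Set.MapsTo γ R R)
    (hγorth : ∀ X ∈ R, ∀ Y ∈ R, (((γ X)ᴴ * γ Y).trace).re = ((Xᴴ * Y).trace).re)
    {k : ℕ} (hk : k ≠ 0) (hX : X ∈ R) (hB : B ∈ R) (hγB : γ B = B) (hBH : Bᴴ = B) :
    (orbitAverage γ k X * B).trace.re = (X * B).trace.re := by
  have hpow : ∀ e : ℕ, ((γ ^ e) X * B).trace.re = (X * B).trace.re := by
    intro e
    induction e with
    | zero => rw [pow_zero, Module.End.one_apply]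
    | succ e ih =>
      rw [pow_succ', Module.End.mul_apply,
        re_trace_apply_mul_of_apply_eq hγorth (Module.End.mapsTo_pow hγR e hX) hB hγB hBH, ih]
  rw [orbitAverage_apply, smul_mul, trace_smul, Complex.smul_re, sum_mul, trace_sum,
    Complex.re_sum, sum_congr rfl fun e _ => hpow e, sum_const, card_range, nsmul_eq_mul,
    smul_eq_mul, inv_mul_cancel_left₀ (by exact_mod_cast hk)]

end FixedPoints

lemma eq_of_re_trace_sub_mul_eq_zero {ι : Type*} [Fintype ι] (A : Submodule ℝ (Matrix ι ι ℂ))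
    {z p q : Matrix ι ι ℂ} (hp : p ∈ A) (hpH : pᴴ = p) (hq : q ∈ A) (hqH : qᴴ = q)
    (hzp : ∀ B ∈ A, Bᴴ = B → ((z - p) * B).trace.re = 0)
    (hzq : ∀ B ∈ A, Bᴴ = B → ((z - q) * B).trace.re = 0) : p = q := by
  have hd : p - q ∈ A := A.sub_mem hp hq
  have hdH : (p - q)ᴴ = p - q := by rw [conjTranspose_sub, hpH, hqH]
  refine sub_eq_zero.mp (eq_zero_of_re_trace_conjTranspose_mul_self_nonpos (le_of_eq ?_))
  rw [hdH, show (p - q) * (p - q) = (z - q) * (p - q) - (z - p) * (p - q) by noncomm_ring,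
    trace_sub, Complex.sub_re, hzq _ hd hdH, hzp _ hd hdH, sub_zero]

theorem fixedPointAlgebra_projection_open_general (n : ℕ)
    (R : Submodule ℝ (Matrix (Fin n) (Fin n) ℂ))
    (γ : Module.End ℝ (Matrix (Fin n) (Fin n) ℂ))
    (hγR : ∀ X ∈ R, γ X ∈ R)
    (hγorth : ∀ X ∈ R, ∀ Y ∈ R, (((γ X)ᴴ * γ Y).trace).re = ((Xᴴ * Y).trace).re)
    (k : ℕ) (hk : 0 < k) (hγk : ∀ X ∈ R, (γ ^ k) X = X)
    (Aset : Set (Matrix (Fin n) (Fin n) ℂ))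
    (hAset : Aset = {X | X ∈ R ∧ γ X = X})
    (hA1 : (1 : Matrix (Fin n) (Fin n) ℂ) ∈ Aset)
    (hAmul : ∀ X ∈ Aset, ∀ Y ∈ Aset, X * Y ∈ Aset)
    (hDinv : Set.MapsTo γ (dmat n (R : Set (Matrix (Fin n) (Fin n) ℂ)))
      (dmat n (R : Set (Matrix (Fin n) (Fin n) ℂ))))
    (hstable : ∀ U V : Set (Matrix (Fin n) (Fin n) ℂ), IsOpen U → IsOpen V →
      ∃ W : Set (Matrix (Fin n) (Fin n) ℂ), IsOpen W ∧
        {z | ∃ x ∈ U ∩ dmat n (R : Set (Matrix (Fin n) (Fin n) ℂ)),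
             ∃ y ∈ V ∩ dmat n (R : Set (Matrix (Fin n) (Fin n) ℂ)),
             z = (2⁻¹ : ℝ) • (x + y)}
          = W ∩ dmat n (R : Set (Matrix (Fin n) (Fin n) ℂ)))
    (π : Matrix (Fin n) (Fin n) ℂ → Matrix (Fin n) (Fin n) ℂ)
    (hπmem : ∀ X ∈ R, Xᴴ = X → π X ∈ Aset ∧ (π X)ᴴ = π X)
    (hπorth : ∀ X ∈ R, Xᴴ = X →
      ∀ B ∈ Aset, Bᴴ = B → (((X - π X) * B).trace).re = 0) :
    RelOpenMap π (dmat n (R : Set (Matrix (Fin n) (Fin n) ℂ))) (dmat n Aset) := by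
  subst hAset
  have : LocallyConvexSpace ℝ (Matrix (Fin n) (Fin n) ℂ) :=
    inferInstanceAs (LocallyConvexSpace ℝ (Fin n → Fin n → ℂ))
  set D := dmat n (R : Set (Matrix (Fin n) (Fin n) ℂ))
  let A : Submodule ℝ (Matrix (Fin n) (Fin n) ℂ) := R ⊓ LinearMap.eqLocus γ 1
  have hD : Convex ℝ D := convex_dmat R
  have hγkD : ∀ z ∈ D, (γ ^ k) z = z := fun z hz => hγk z hz.1.1
  have hPD : ∀ z ∈ D, orbitAverage γ k z ∈ D := fun z hz => hD.orbitAverage_mem hDinv hk.ne' hz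
  have hPA : ∀ z ∈ D, orbitAverage γ k z ∈ A := fun z hz =>
    ⟨(hPD z hz).1.1, apply_orbitAverage (hγkD z hz)⟩
  have hπ : ∀ z ∈ D, π z = orbitAverage γ k z := by
    intro z hz
    obtain ⟨hπA, hπH⟩ := hπmem z hz.1.1 hz.1.2.1
    refine eq_of_re_trace_sub_mul_eq_zero A hπA hπH (hPA z hz) (hPD z hz).1.2.1
      (hπorth z hz.1.1 hz.1.2.1) fun B hB hBH => ?_
    rw [sub_mul, trace_sub, Complex.sub_re, sub_eq_zero]
    exact (re_trace_orbitAverage_mul (fun X hX => hγR X hX) hγorth hk.ne' hz.1.1 hB.1 hB.2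
      hBH).symm
  have hDA : dmat n A ⊆ D :=
    dmat_subset_dmat (A.toSubalgebra hA1 fun X Y hX hY => hAmul X hX Y hY) inf_le_left
  refine relOpenMap_of_forall_exists (fun z hz => ?_) fun U hU x hx => ?_
  · rw [hπ z hz]
    exact mem_dmat_of_mem_of_subset (fun X hX => hX.1) (hPD z hz) (hPA z hz)
  · obtain ⟨W, hW, hxW, hWA⟩ := IsMidpointOpen.exists_isOpen_orbitAverage_mem hstable hD
      (LinearMap.continuous_of_finiteDimensional γ) hDinv hk.ne' hγkD hU hx.1 hx.2
    refine ⟨W, hW, hπ x hx.2 ▸ hxW, fun y ⟨hyW, hyA⟩ => ?_⟩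
    obtain ⟨ρ, hρ, rfl⟩ := hWA y ⟨hyW, hDA hyA⟩ hyA.1.1.2
    exact ⟨ρ, hρ, hπ ρ hρ.2⟩

/-- Let `R` be a real matrix system on `ℂ^n` whose set of density matrices
`D(R)` is stable (the midpoint map is open) and invariant under an orthogonal
transformation `γ` of `R` generating a finite cyclic group, and let
`A = {X ∈ R : γX = X}` be a real *-subalgebra. Then the orthogonal projection
`D(R) → D(A)` is open. -/
theorem fixedPointAlgebra_projection_open (n : ℕ)
    (R : Submodule ℝ (Matrix (Fin n) (Fin n) ℂ))
    (h1 : (1 : Matrix (Fin n) (Fin n) ℂ) ∈ R)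
    (hstar : ∀ X ∈ R, Xᴴ ∈ R)
    (γ : Module.End ℝ (Matrix (Fin n) (Fin n) ℂ))
    (hγR : ∀ X ∈ R, γ X ∈ R)
    (hγorth : ∀ X ∈ R, ∀ Y ∈ R, (((γ X)ᴴ * γ Y).trace).re = ((Xᴴ * Y).trace).re)
    (k : ℕ) (hk : 0 < k) (hγk : ∀ X ∈ R, (γ ^ k) X = X)
    (Aset : Set (Matrix (Fin n) (Fin n) ℂ))
    (hAset : Aset = {X | X ∈ R ∧ γ X = X})
    (hA1 : (1 : Matrix (Fin n) (Fin n) ℂ) ∈ Aset)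
    (hAstar : ∀ X ∈ Aset, Xᴴ ∈ Aset)
    (hAmul : ∀ X ∈ Aset, ∀ Y ∈ Aset, X * Y ∈ Aset)
    (hDinv : Set.MapsTo γ (dmat n (R : Set (Matrix (Fin n) (Fin n) ℂ)))
      (dmat n (R : Set (Matrix (Fin n) (Fin n) ℂ))))
    (hstable : ∀ U V : Set (Matrix (Fin n) (Fin n) ℂ), IsOpen U → IsOpen V →
      ∃ W : Set (Matrix (Fin n) (Fin n) ℂ), IsOpen W ∧
        {z | ∃ x ∈ U ∩ dmat n (R : Set (Matrix (Fin n) (Fin n) ℂ)),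
             ∃ y ∈ V ∩ dmat n (R : Set (Matrix (Fin n) (Fin n) ℂ)),
             z = (2⁻¹ : ℝ) • (x + y)}
          = W ∩ dmat n (R : Set (Matrix (Fin n) (Fin n) ℂ)))
    (π : Matrix (Fin n) (Fin n) ℂ → Matrix (Fin n) (Fin n) ℂ)
    (hπmem : ∀ X ∈ R, Xᴴ = X → π X ∈ Aset ∧ (π X)ᴴ = π X)
    (hπorth : ∀ X ∈ R, Xᴴ = X →
      ∀ B ∈ Aset, Bᴴ = B → (((X - π X) * B).trace).re = 0) :
    RelOpenMap π (dmat n (R : Set (Matrix (Fin n) (Fin n) ℂ))) (dmat n Aset) :=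
  fixedPointAlgebra_projection_open_general n R γ hγR hγorth k hk hγk Aset hAset hA1 hAmul hDinv
    hstable π hπmem hπorth
end

section
/- For any partition n = n₁ + … + n_k, the block-diagonal pinching map D(M_n) → D(M_{n₁} ⊕ … ⊕ M_{n_k}) (orthogonal projection onto block-diagonal matrices) is open. -/
/-!
Let `Φ` be the pinching, `ρ` a state, `σ = Φ ρ`, `P` the support projection of `σ` and `σ⁻¹ᐟ²`
the pseudo-inverse of `√σ`. The matrix `K = σ⁻¹ᐟ² ρ σ⁻¹ᐟ² + (1 - P)` is positive with
`Φ K = P + (1 - P) = 1`, and `√σ K √σ = P ρ P = ρ`: the positive matrix `(1 - P) ρ (1 - P)` has the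
trace of its pinching `(1 - P) σ (1 - P) = 0`, so it vanishes. For a block-diagonal state `σ'`,
the state `ρ' = √σ' K √σ'` has `Φ ρ' = √σ' (Φ K) √σ' = σ'` because `√σ'` is block-diagonal, and
`ρ'` is close to `ρ` when `σ'` is close to `σ` by continuity of the square root.
-/

open Matrix ComplexOrder

open Filter Topology
open scoped MatrixOrder

lemma exists_isOpen_inter_eq_of_mem_nhdsWithin {X : Type*} [TopologicalSpace X] {W T : Set X}
    (hWT : W ⊆ T) (hW : ∀ x ∈ W, W ∈ 𝓝[T] x) : ∃ V, IsOpen V ∧ W = V ∩ T := by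
  refine ⟨interior {y | y ∈ T → y ∈ W}, isOpen_interior, Set.Subset.antisymm
    (fun x hx => ⟨mem_interior_iff_mem_nhds.2 (mem_nhdsWithin_iff_eventually.1 (hW x hx)),
      hWT hx⟩) ?_⟩
  rintro y ⟨hyV, hyT⟩
  exact interior_subset hyV hyT

namespace Matrix

variable {n 𝕜 : Type*} [Fintype n] [DecidableEq n] [RCLike 𝕜]

/-- Since `(0 : ℝ)⁻¹ = 0`, this is the Moore–Penrose pseudo-inverse of a Hermitian matrix. -/
noncomputable def pinv (A : Matrix n n 𝕜) : Matrix n n 𝕜 :=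
  cfc (·⁻¹ : ℝ → ℝ) A

lemma isSelfAdjoint_pinv (A : Matrix n n 𝕜) : IsSelfAdjoint (pinv A) :=
  cfc_predicate _ A

lemma commute_pinv (A : Matrix n n 𝕜) : Commute A (pinv A) :=
  ((Commute.refl A).cfc_real _).symm

lemma mul_pinv_mul_self {A : Matrix n n 𝕜} (hA : IsSelfAdjoint A) : A * pinv A * A = A := by
  have hfin := A.finite_real_spectrum
  conv_rhs => rw [← cfc_id' ℝ A, ← cfc_congr (fun x _ => mul_inv_mul_cancel x)]
  rw [cfc_mul _ _ A (hfin.continuousOn _) (hfin.continuousOn _),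
    cfc_mul _ _ A (hfin.continuousOn _) (hfin.continuousOn _), cfc_id' ℝ A, pinv]

lemma isStarProjection_mul_pinv {A : Matrix n n 𝕜} (hA : IsSelfAdjoint A) :
    IsStarProjection (A * pinv A) where
  isIdempotentElem := by
    rw [IsIdempotentElem, ← mul_assoc, mul_pinv_mul_self hA]
  isSelfAdjoint := by
    rw [IsSelfAdjoint, star_mul, (isSelfAdjoint_pinv A).star_eq, hA.star_eq, commute_pinv A]

lemma mul_eq_zero_of_star_mul_mul_eq_zero {ρ Q : Matrix n n 𝕜} (hρ : 0 ≤ ρ)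
    (h : star Q * ρ * Q = 0) : ρ * Q = 0 := by
  obtain ⟨B, rfl⟩ := CStarAlgebra.nonneg_iff_eq_star_mul_self.1 hρ
  have hBQ : B * Q = 0 := by
    rw [← conjTranspose_mul_self_eq_zero, conjTranspose_mul]
    simpa only [star_eq_conjTranspose, mul_assoc] using h
  rw [mul_assoc, hBQ, mul_zero]

end Matrix

section Pinching

variable {n κ 𝕜 : Type*} [Fintype n] [Fintype κ] [RCLike 𝕜] (E : κ → Matrix n n 𝕜)

def pinching (M : Matrix n n 𝕜) : Matrix n n 𝕜 :=
  ∑ i, E i * M * E i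

variable {E}

lemma pinching_add (M N : Matrix n n 𝕜) : pinching E (M + N) = pinching E M + pinching E N := by
  simp only [pinching, mul_add, add_mul, Finset.sum_add_distrib]

lemma pinching_mul_mul {T M S : Matrix n n 𝕜} (hT : ∀ i, Commute (E i) T)
    (hS : ∀ i, Commute (E i) S) : pinching E (T * M * S) = T * pinching E M * S := by
  simp only [pinching, Finset.mul_sum, Finset.sum_mul]
  refine Finset.sum_congr rfl fun i _ => ?_
  calc E i * (T * M * S) * E i = E i * T * M * (S * E i) := by simp only [mul_assoc]
    _ = T * (E i * M * E i) * S := by rw [(hT i).eq, ← (hS i).eq]; simp only [mul_assoc]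

lemma pinching_eq_self [DecidableEq n] (hE : ∀ i, IsIdempotentElem (E i)) (hsum : ∑ i, E i = 1)
    {M : Matrix n n 𝕜} (hM : ∀ i, Commute (E i) M) : pinching E M = M := by
  calc pinching E M = ∑ i, E i * M := by
        refine Finset.sum_congr rfl fun i _ => ?_
        rw [mul_assoc, ← (hM i).eq, ← mul_assoc, (hE i).eq]
    _ = M := by rw [← Finset.sum_mul, hsum, one_mul]

lemma pinching_nonneg (hE : ∀ i, IsSelfAdjoint (E i)) {M : Matrix n n 𝕜} (hM : 0 ≤ M) :
    0 ≤ pinching E M :=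
  Finset.sum_nonneg fun i _ => (hE i).conjugate_nonneg hM

lemma trace_pinching [DecidableEq n] (hE : ∀ i, IsIdempotentElem (E i)) (hsum : ∑ i, E i = 1)
    (M : Matrix n n 𝕜) : (pinching E M).trace = M.trace := by
  rw [pinching, trace_sum]
  calc ∑ i, (E i * M * E i).trace = ∑ i, (E i * M).trace := by
        refine Finset.sum_congr rfl fun i _ => ?_
        rw [trace_mul_cycle, (hE i).eq]
    _ = M.trace := by rw [← trace_sum, ← Finset.sum_mul, hsum, one_mul]

lemma commute_pinching [DecidableEq κ] (hE : ∀ i, IsIdempotentElem (E i))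
    (horth : Pairwise fun i j => E i * E j = 0) (j : κ) (M : Matrix n n 𝕜) :
    Commute (E j) (pinching E M) := by
  have hterm : ∀ i, i ≠ j → E j * (E i * M * E i) = 0 ∧ E i * M * E i * E j = 0 := fun i hij =>
    ⟨by rw [← mul_assoc, ← mul_assoc, horth hij.symm, zero_mul, zero_mul],
      by rw [mul_assoc, horth hij, mul_zero]⟩
  rw [Commute, SemiconjBy, pinching, Finset.mul_sum, Finset.sum_mul,
    Finset.sum_eq_single j (fun i _ hij => (hterm i hij).1) (by simp),
    Finset.sum_eq_single j (fun i _ hij => (hterm i hij).2) (by simp)]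
  simp only [← mul_assoc, (hE j).eq]
  rw [mul_assoc (E j * M), (hE j).eq]

lemma mul_eq_zero_of_mul_pinching_mul_eq_zero [DecidableEq n] (hE : ∀ i, IsStarProjection (E i))
    (hsum : ∑ i, E i = 1) {ρ Q : Matrix n n 𝕜} (hρ : 0 ≤ ρ) (hQ : IsSelfAdjoint Q)
    (hQE : ∀ i, Commute (E i) Q) (h : Q * pinching E ρ * Q = 0) : ρ * Q = 0 := by
  have hQρQ : 0 ≤ Q * ρ * Q := hQ.conjugate_nonneg hρ
  have htrace : (Q * ρ * Q).trace = 0 := by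
    rw [← trace_pinching (fun i => (hE i).isIdempotentElem) hsum, pinching_mul_mul hQE hQE, h,
      trace_zero]
  refine mul_eq_zero_of_star_mul_mul_eq_zero hρ ?_
  rw [hQ.star_eq]
  exact ((nonneg_iff_posSemidef.1 hQρQ).trace_eq_zero_iff).1 htrace

end Pinching

section Recovery

variable {n κ 𝕜 : Type*} [Fintype n] [DecidableEq n] [Fintype κ] [DecidableEq κ] [RCLike 𝕜]
  {E : κ → Matrix n n 𝕜}

lemma commute_cfcSqrt {A B : Matrix n n 𝕜} (h : Commute A B) : Commute (CFC.sqrt A) B := by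
  rw [CFC.sqrt_eq_cfc]
  exact h.cfc_nnreal _

lemma exists_pinching_eq_one_and_sqrt_mul_mul_sqrt_eq (hE : ∀ i, IsStarProjection (E i))
    (hsum : ∑ i, E i = 1) (horth : Pairwise fun i j => E i * E j = 0) {ρ : Matrix n n 𝕜}
    (hρ : 0 ≤ ρ) :
    ∃ K, 0 ≤ K ∧ pinching E K = 1 ∧
      CFC.sqrt (pinching E ρ) * K * CFC.sqrt (pinching E ρ) = ρ := by
  set σ := pinching E ρ
  have hσ : 0 ≤ σ := pinching_nonneg (fun i => (hE i).isSelfAdjoint) hρ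
  have hσE : ∀ i, Commute (E i) σ :=
    fun i => commute_pinching (fun i => (hE i).isIdempotentElem) horth i ρ
  set s := CFC.sqrt σ
  have hss : s * s = σ := CFC.sqrt_mul_sqrt_self σ hσ
  have hs : IsSelfAdjoint s := (CFC.sqrt_nonneg σ).isSelfAdjoint
  have hsE : ∀ i, Commute (E i) s := fun i => (commute_cfcSqrt (hσE i).symm).symm
  set m := pinv s
  have hsm : s * m = m * s := (commute_pinv s).eq
  have hsms : s * m * s = s := mul_pinv_mul_self hs
  have hmE : ∀ i, Commute (E i) m := fun i => ((hsE i).symm.cfc_real _).symm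
  obtain ⟨P, hPdef⟩ : ∃ P, s * m = P := ⟨_, rfl⟩
  have hP : IsStarProjection P := hPdef ▸ isStarProjection_mul_pinv hs
  have hQE : ∀ i, Commute (E i) (1 - P) :=
    fun i => (Commute.one_right _).sub_right (hPdef ▸ (hsE i).mul_right (hmE i))
  have hPs : P * s = s := hPdef ▸ hsms
  have hsP : s * P = s := by rw [← hPdef, hsm, ← mul_assoc, hsms]
  have hρP : ρ * P = ρ := by
    have hσQ : (1 - P) * σ * (1 - P) = 0 := by
      rw [← hss, sub_mul, one_mul, ← mul_assoc P, hPs, sub_self, zero_mul]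
    have := mul_eq_zero_of_mul_pinching_mul_eq_zero hE hsum hρ hP.one_sub.isSelfAdjoint hQE hσQ
    rwa [mul_sub, mul_one, sub_eq_zero, eq_comm] at this
  have hPρ : P * ρ = ρ := by
    simpa only [star_mul, hP.isSelfAdjoint.star_eq, hρ.isSelfAdjoint.star_eq] using
      congrArg star hρP
  refine ⟨m * ρ * m + (1 - P), add_nonneg ((isSelfAdjoint_pinv s).conjugate_nonneg hρ)
    hP.one_sub_nonneg, ?_, ?_⟩
  · have hmσm : m * σ * m = P := by
      calc m * σ * m = (m * s) * (s * m) := by rw [← hss]; simp only [mul_assoc]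
        _ = P := by rw [← hsm, hPdef, hP.isIdempotentElem.eq]
    rw [pinching_add, pinching_mul_mul hmE hmE, hmσm,
      pinching_eq_self (fun i => (hE i).isIdempotentElem) hsum hQE, add_sub_cancel]
  · calc s * (m * ρ * m + (1 - P)) * s = s * m * ρ * (m * s) + (s - s * P) * s := by
          noncomm_ring
      _ = ρ := by rw [← hsm, hPdef, hPρ, hρP, hsP, sub_self, zero_mul, add_zero]

end Recovery

open scoped Matrix.Norms.L2Operator in
/-- The `C⋆`-norm on matrices induces their usual (entrywise) topology. -/
lemma continuousOn_cfcSqrt {n : Type*} [Fintype n] [DecidableEq n] :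
    ContinuousOn (CFC.sqrt : Matrix n n ℂ → Matrix n n ℂ) {A | 0 ≤ A} :=
  CFC.continuousOn_sqrt

theorem eventually_exists_pinching_eq {n κ : Type*} [Fintype n] [DecidableEq n] [Fintype κ]
    [DecidableEq κ] {E : κ → Matrix n n ℂ} (hE : ∀ i, IsStarProjection (E i))
    (hsum : ∑ i, E i = 1) (horth : Pairwise fun i j => E i * E j = 0) {ρ : Matrix n n ℂ}
    (hρ : 0 ≤ ρ) {U : Set (Matrix n n ℂ)} (hU : U ∈ 𝓝 ρ) :
    ∀ᶠ σ in 𝓝[{X | 0 ≤ X ∧ ∀ i, Commute (E i) X}] pinching E ρ,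
      ∃ ρ' ∈ U, 0 ≤ ρ' ∧ pinching E ρ' = σ := by
  obtain ⟨K, hK, hpK, hρK⟩ := exists_pinching_eq_one_and_sqrt_mul_mul_sqrt_eq hE hsum horth hρ
  have hcont : ContinuousWithinAt (fun X => CFC.sqrt X * K * CFC.sqrt X) {X | 0 ≤ X}
      (pinching E ρ) := by
    have hsqrt := continuousOn_cfcSqrt _ (pinching_nonneg (fun i => (hE i).isSelfAdjoint) hρ)
    exact (hsqrt.mul continuousWithinAt_const).mul hsqrt
  filter_upwards [nhdsWithin_mono _ (fun X hX => hX.1)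
      (hcont.preimage_mem_nhdsWithin (hρK ▸ hU)), self_mem_nhdsWithin]
    with σ hσU ⟨hσ, hσE⟩
  refine ⟨_, hσU, (CFC.sqrt_nonneg σ).isSelfAdjoint.conjugate_nonneg hK, ?_⟩
  have hsE : ∀ i, Commute (E i) (CFC.sqrt σ) := fun i => (commute_cfcSqrt (hσE i).symm).symm
  rw [pinching_mul_mul hsE hsE, hpK, mul_one, CFC.sqrt_mul_sqrt_self σ hσ]

namespace Matrix

variable {κ : Type*} [DecidableEq κ] {m : κ → Type*} [∀ i, DecidableEq (m i)] {𝕜 : Type*}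
  [RCLike 𝕜]

variable (m 𝕜) in
def blockProj (i : κ) : Matrix (Σ j, m j) (Σ j, m j) 𝕜 :=
  diagonal fun x => if x.1 = i then 1 else 0

lemma isStarProjection_blockProj [Fintype κ] [∀ i, Fintype (m i)] (i : κ) :
    IsStarProjection (blockProj m 𝕜 i) where
  isIdempotentElem := by
    rw [IsIdempotentElem, blockProj, diagonal_mul_diagonal]
    congr 1; ext x; split_ifs <;> simp
  isSelfAdjoint := by
    rw [IsSelfAdjoint, blockProj, star_eq_conjTranspose, diagonal_conjTranspose]
    congr 1; ext x; simp [apply_ite]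

lemma sum_blockProj [Fintype κ] : ∑ i, blockProj m 𝕜 i = 1 := by
  ext x y
  simp [blockProj, Matrix.sum_apply, diagonal_apply, one_apply]

lemma blockProj_mul_blockProj_of_ne [Fintype κ] [∀ i, Fintype (m i)] :
    Pairwise fun i j => blockProj m 𝕜 i * blockProj m 𝕜 j = 0 := by
  intro i j hij
  rw [blockProj, blockProj, diagonal_mul_diagonal, ← diagonal_zero]
  congr 1; ext x; split_ifs with hi hj <;> simp_all

lemma pinching_blockProj [Fintype κ] [∀ i, Fintype (m i)]
    (M : Matrix (Σ j, m j) (Σ j, m j) 𝕜) :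
    pinching (blockProj m 𝕜) M = blockDiagonal' (blockDiag' M) := by
  ext ⟨i, a⟩ ⟨j, b⟩
  by_cases hij : i = j
  · subst hij
    simp [pinching, blockProj, Matrix.sum_apply, blockDiagonal'_apply_eq, blockDiag'_apply]
  · simp [pinching, blockProj, Matrix.sum_apply, blockDiagonal'_apply_ne _ _ _ hij, hij]

lemma commute_blockProj [Fintype κ] [∀ i, Fintype (m i)] {M : Matrix (Σ j, m j) (Σ j, m j) 𝕜}
    (hM : ∀ (i j : κ) (a : m i) (b : m j), i ≠ j → M ⟨i, a⟩ ⟨j, b⟩ = 0) (k : κ) :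
    Commute (blockProj m 𝕜 k) M := by
  ext ⟨i, a⟩ ⟨j, b⟩
  by_cases hij : i = j
  · subst hij
    simp [blockProj]
  · simp [blockProj, hM i j a b hij]

end Matrix

/-- For any partition `n = n₁ + … + n_k`, the block-diagonal pinching map
`D(M_n) → D(M_{n₁} ⊕ … ⊕ M_{n_k})` is open. -/
theorem pinching_blocks_open (k : ℕ) (n : Fin k → ℕ)
    (D : Set (Matrix (Σ i, Fin (n i)) (Σ i, Fin (n i)) ℂ))
    (hD : D = {ρ | ρ.PosSemidef ∧ ρ.trace = 1})
    (Db : Set (Matrix (Σ i, Fin (n i)) (Σ i, Fin (n i)) ℂ))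
    (hDb : Db = {ρ | ρ ∈ D ∧ ∀ (i j : Fin k) (a : Fin (n i)) (b : Fin (n j)),
        i ≠ j → ρ ⟨i, a⟩ ⟨j, b⟩ = 0})
    (pinch : Matrix (Σ i, Fin (n i)) (Σ i, Fin (n i)) ℂ →
      Matrix (Σ i, Fin (n i)) (Σ i, Fin (n i)) ℂ)
    (hpinch : pinch = fun M =>
      Matrix.blockDiagonal' (fun i => Matrix.of fun a b => M ⟨i, a⟩ ⟨i, b⟩)) :
    RelOpenMap pinch D Db := by
  have hE := isStarProjection_blockProj (m := fun i => Fin (n i)) (𝕜 := ℂ)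
  have hidem i := (hE i).isIdempotentElem
  obtain rfl : pinch = pinching (blockProj (fun i => Fin (n i)) ℂ) :=
    hpinch.trans (funext fun ρ => (pinching_blockProj ρ).symm)
  have hDb_sub : Db ⊆ {X | 0 ≤ X ∧ ∀ i, Commute (blockProj (fun i => Fin (n i)) ℂ i) X} := by
    rw [hDb, hD]
    exact fun σ hσ => ⟨nonneg_iff_posSemidef.2 hσ.1.1, commute_blockProj hσ.2⟩
  subst hD hDb
  intro U hU
  refine exists_isOpen_inter_eq_of_mem_nhdsWithin ?_ ?_
  · rintro _ ⟨ρ, ⟨-, hρ, htr⟩, rfl⟩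
    refine ⟨⟨?_, ?_⟩, fun i j a b hij => ?_⟩
    · exact nonneg_iff_posSemidef.1
        (pinching_nonneg (fun i => (hE i).isSelfAdjoint) (nonneg_iff_posSemidef.2 hρ))
    · rw [trace_pinching hidem sum_blockProj, htr]
    · rw [pinching_blockProj, blockDiagonal'_apply_ne _ _ _ hij]
  · rintro _ ⟨ρ, ⟨hρU, hρ, -⟩, rfl⟩
    filter_upwards [nhdsWithin_mono _ hDb_sub (eventually_exists_pinching_eq hE sum_blockProj
        blockProj_mul_blockProj_of_ne (nonneg_iff_posSemidef.2 hρ) (hU.mem_nhds hρU)),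
        self_mem_nhdsWithin]
      with σ ⟨ρ', hρ'U, hρ', hρ'σ⟩ ⟨⟨_, hσtr⟩, _⟩
    refine ⟨ρ', ⟨hρ'U, nonneg_iff_posSemidef.1 hρ', ?_⟩, hρ'σ⟩
    rw [← trace_pinching hidem sum_blockProj, hρ'σ, hσtr]
end

section
/- If A is a *-subalgebra of M_n containing the identity, then the orthogonal projection D(M_n) → D(A) with respect to the Frobenius inner product is an open map. -/
/-!
Orthogonality makes `π` a positive, trace-preserving `A`-bimodule map. For a density matrix `ρ`
with `τ = π ρ` there is a positive `C` with `π C = 1` and `τ^{1/2} C τ^{1/2} = ρ`; then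
`σ ↦ σ^{1/2} C σ^{1/2}` is a section of `π` over the density matrices in `A` through `ρ`,
continuous because the square root is, and a map with such sections through every point is open.
-/

open Matrix ComplexOrder

open scoped MatrixOrder

theorem relOpenMap_of_forall_exists_section {X Y : Type*} [TopologicalSpace X]
    [TopologicalSpace Y] {f : X → Y} {S : Set X} {T : Set Y} (hf : Set.MapsTo f S T)
    (hsec : ∀ x ∈ S, ∃ s : Y → X, ContinuousWithinAt s T (f x) ∧ s (f x) = x ∧
      ∀ y ∈ T, s y ∈ S ∧ f (s y) = y) :
    RelOpenMap f S T := by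
  intro U hU
  refine ⟨⋃₀ {W | IsOpen W ∧ W ∩ T ⊆ f '' (U ∩ S)}, isOpen_sUnion fun W hW => hW.1, ?_⟩
  apply subset_antisymm
  · rintro _ ⟨x, ⟨hxU, hxS⟩, rfl⟩
    obtain ⟨s, hs, hsx, hsT⟩ := hsec x hxS
    obtain ⟨W, hW, hxW, hWT⟩ := mem_nhdsWithin.mp (hs (hU.mem_nhds (by rwa [hsx])))
    exact ⟨⟨W, ⟨hW, fun y hy => ⟨s y, ⟨hWT hy, (hsT y hy.2).1⟩, (hsT y hy.2).2⟩⟩, hxW⟩, hf hxS⟩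
  · rintro y ⟨⟨W, ⟨-, hWT⟩, hyW⟩, hyT⟩
    exact hWT ⟨hyW, hyT⟩

variable {ι : Type*} [Fintype ι] [DecidableEq ι]

namespace Matrix

theorem PosSemidef.trace_mul_nonneg_s16 {M N : Matrix ι ι ℂ} (hM : M.PosSemidef)
    (hN : N.PosSemidef) : 0 ≤ (M * N).trace := by
  obtain ⟨R, rfl⟩ := CStarAlgebra.nonneg_iff_eq_star_mul_self.mp hM.nonneg
  rw [mul_assoc, trace_mul_comm, star_eq_conjTranspose]
  exact (hN.mul_mul_conjTranspose_same R).trace_nonneg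

theorem PosSemidef.mul_eq_zero_of_trace_mul_eq_zero {ρ E : Matrix ι ι ℂ} (hρ : ρ.PosSemidef)
    (hE : E.PosSemidef) (h : (E * ρ).trace = 0) : ρ * E = 0 := by
  obtain ⟨R, rfl⟩ := CStarAlgebra.nonneg_iff_eq_star_mul_self.mp hρ.nonneg
  obtain ⟨F, rfl⟩ := CStarAlgebra.nonneg_iff_eq_star_mul_self.mp hE.nonneg
  simp only [star_eq_conjTranspose] at h ⊢
  have hRF : R * Fᴴ = 0 := by
    rwa [← trace_conjTranspose_mul_self_eq_zero_iff, conjTranspose_mul, conjTranspose_conjTranspose,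
      show F * Rᴴ * (R * Fᴴ) = F * (Rᴴ * R) * Fᴴ by simp only [mul_assoc], trace_mul_comm,
      ← mul_assoc]
  rw [mul_assoc, ← mul_assoc R, hRF, zero_mul, mul_zero]

theorem isHermitian_cfc (f : ℝ → ℝ) (a : Matrix ι ι ℂ) : (cfc f a).IsHermitian :=
  isHermitian_iff_isSelfAdjoint.mpr IsSelfAdjoint.cfc

theorem posSemidef_cfc {f : ℝ → ℝ} {a : Matrix ι ι ℂ} (h : ∀ x ∈ spectrum ℝ a, 0 ≤ f x) :
    (cfc f a).PosSemidef :=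
  (cfc_nonneg h).posSemidef

theorem PosSemidef.spectrum_nonneg {a : Matrix ι ι ℂ} (ha : a.PosSemidef) :
    ∀ x ∈ spectrum ℝ a, 0 ≤ x :=
  fun _ hx => spectrum_nonneg_of_nonneg ha.nonneg hx

theorem PosSemidef.cfc_mul_mul_cfc {C : Matrix ι ι ℂ} (hC : C.PosSemidef) (f : ℝ → ℝ)
    (a : Matrix ι ι ℂ) : (cfc f a * C * cfc f a).PosSemidef := by
  simpa only [(isHermitian_cfc f a).eq] using hC.conjTranspose_mul_mul_same (cfc f a)

theorem cfc_mul_cfc_eq {f g h : ℝ → ℝ} {a : Matrix ι ι ℂ}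
    (hfg : ∀ x ∈ spectrum ℝ a, f x * g x = h x) : cfc f a * cfc g a = cfc h a :=
  (cfc_mul f g a (a.finite_real_spectrum.continuousOn f)
    (a.finite_real_spectrum.continuousOn g)).symm.trans (cfc_congr hfg)

theorem cfc_sqrt_mul_cfc_sqrt {a : Matrix ι ι ℂ} (ha : a.PosSemidef) :
    cfc Real.sqrt a * cfc Real.sqrt a = a :=
  (cfc_mul_cfc_eq fun x hx => Real.mul_self_sqrt (ha.spectrum_nonneg x hx)).trans
    (cfc_id' ℝ a ha.isHermitian.isSelfAdjoint)

-- Since `0⁻¹ = 0`, `√x * (√x)⁻¹` is the indicator of `0 < x`: this is the support projection.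
theorem posSemidef_one_sub_cfc_support (a : Matrix ι ι ℂ) :
    (1 - cfc (fun x => Real.sqrt x * (Real.sqrt x)⁻¹) a).PosSemidef := by
  set P := cfc (fun x => Real.sqrt x * (Real.sqrt x)⁻¹) a
  have hPP : P * P = P := cfc_mul_cfc_eq fun x _ => by
    by_cases h : Real.sqrt x = 0 <;> simp [h]
  have hE := posSemidef_conjTranspose_mul_self (1 - P)
  rwa [(isHermitian_one.sub (isHermitian_cfc _ _)).eq, sub_mul, one_mul, mul_sub, mul_one, hPP,
    sub_self, sub_zero] at hE

open scoped Matrix.Norms.L2Operator in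
theorem continuousOn_cfc_of_continuous {f : ℝ → ℝ} (hf : Continuous f) :
    ContinuousOn (cfc f) {a : Matrix ι ι ℂ | a.IsHermitian} :=
  ContinuousOn.cfc_of_mem_nhdsSet (s := Set.univ) f Filter.univ_mem continuousOn_id
    (fun _ ha => ha.isSelfAdjoint) hf.continuousOn

theorem cfc_mem_starSubalgebra {A : StarSubalgebra ℂ (Matrix ι ι ℂ)} {a : Matrix ι ι ℂ}
    (ha : a ∈ A) (f : ℝ → ℝ) : cfc f a ∈ A :=
  have : IsClosed (A : Set (Matrix ι ι ℂ)) :=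
    A.toSubalgebra.toSubmodule.closed_of_finiteDimensional
  cfc_mem f ha

-- Testing against the negative part `N` of `m` gives `0 ≤ tr (N * m) = -tr (Nᴴ * N)`.
theorem posSemidef_of_forall_trace_mul_nonneg {A : StarSubalgebra ℂ (Matrix ι ι ℂ)}
    {m : Matrix ι ι ℂ} (hm : m ∈ A) (hmH : m.IsHermitian)
    (h : ∀ B ∈ A, B.PosSemidef → 0 ≤ (B * m).trace) : m.PosSemidef := by
  set N := cfc (fun x : ℝ => max (-x) 0) m
  have hNm : N * m = -(Nᴴ * N) := by
    conv_lhs => rw [← cfc_id' ℝ m hmH.isSelfAdjoint]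
    rw [(isHermitian_cfc _ _).eq, cfc_mul_cfc_eq (fun x _ => rfl), cfc_mul_cfc_eq (fun x _ => rfl),
      ← cfc_neg]
    refine cfc_congr fun x _ => ?_
    rcases le_total x 0 with hx | hx <;> simp [hx]
  have hN : N = cfc (0 : ℝ → ℝ) m := by
    have hNm_nonneg :=
      h N (cfc_mem_starSubalgebra hm _) (posSemidef_cfc fun x _ => le_max_right _ _)
    rw [hNm, trace_neg, neg_nonneg] at hNm_nonneg
    rw [cfc_zero]
    exact trace_conjTranspose_mul_self_eq_zero_iff.mp
      (le_antisymm hNm_nonneg (posSemidef_conjTranspose_mul_self N).trace_nonneg)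
  refine ((StarOrderedRing.nonneg_iff_spectrum_nonneg (R := ℝ) m hmH.isSelfAdjoint).mpr
    fun x hx => ?_).posSemidef
  simpa using eqOn_of_cfc_eq_cfc hN (m.finite_real_spectrum.continuousOn _)
    (m.finite_real_spectrum.continuousOn _) hmH.isSelfAdjoint hx

end Matrix

structure IsOrthogonalProjection (A : StarSubalgebra ℂ (Matrix ι ι ℂ))
    (π : Matrix ι ι ℂ → Matrix ι ι ℂ) : Prop where
  mem : ∀ M, π M ∈ A
  orthogonal : ∀ M, ∀ B ∈ A, (Bᴴ * (M - π M)).trace = 0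

namespace IsOrthogonalProjection

variable {A : StarSubalgebra ℂ (Matrix ι ι ℂ)} {π : Matrix ι ι ℂ → Matrix ι ι ℂ}

theorem trace_mul_sub_apply (hπ : IsOrthogonalProjection A π) {B : Matrix ι ι ℂ} (hB : B ∈ A)
    (M : Matrix ι ι ℂ) : (B * (M - π M)).trace = 0 := by
  simpa [← star_eq_conjTranspose] using hπ.orthogonal M _ (star_mem hB)

theorem trace_mul_apply (hπ : IsOrthogonalProjection A π) {B : Matrix ι ι ℂ} (hB : B ∈ A)
    (M : Matrix ι ι ℂ) : (B * π M).trace = (B * M).trace := by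
  rw [eq_comm, ← sub_eq_zero, ← trace_sub, ← mul_sub, hπ.trace_mul_sub_apply hB]

theorem trace_apply (hπ : IsOrthogonalProjection A π) (M : Matrix ι ι ℂ) :
    (π M).trace = M.trace := by
  simpa using hπ.trace_mul_apply (one_mem A) M

theorem eq_of_orthogonal (hπ : IsOrthogonalProjection A π) {M b : Matrix ι ι ℂ} (hb : b ∈ A)
    (h : ∀ B ∈ A, (Bᴴ * (M - b)).trace = 0) : π M = b := by
  have hd : π M - b ∈ A := sub_mem (hπ.mem M) hb
  rw [← sub_eq_zero, ← trace_conjTranspose_mul_self_eq_zero_iff]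
  calc ((π M - b)ᴴ * (π M - b)).trace
      = ((π M - b)ᴴ * (M - b)).trace - ((π M - b)ᴴ * (M - π M)).trace := by
        rw [← trace_sub, ← mul_sub, sub_sub_sub_cancel_left]
    _ = 0 := by rw [h _ hd, hπ.orthogonal M _ hd, sub_zero]

theorem apply_of_mem (hπ : IsOrthogonalProjection A π) {b : Matrix ι ι ℂ} (hb : b ∈ A) :
    π b = b :=
  hπ.eq_of_orthogonal hb fun B _ => by rw [sub_self, mul_zero, trace_zero]

theorem map_add (hπ : IsOrthogonalProjection A π) (X Y : Matrix ι ι ℂ) :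
    π (X + Y) = π X + π Y :=
  hπ.eq_of_orthogonal (add_mem (hπ.mem X) (hπ.mem Y)) fun B hB => by
    rw [add_sub_add_comm, mul_add, trace_add, hπ.orthogonal X B hB, hπ.orthogonal Y B hB, add_zero]

theorem apply_mul_mul (hπ : IsOrthogonalProjection A π) {G H : Matrix ι ι ℂ} (hG : G ∈ A)
    (hH : H ∈ A) (X : Matrix ι ι ℂ) : π (G * X * H) = G * π X * H :=
  hπ.eq_of_orthogonal (mul_mem (mul_mem hG (hπ.mem X)) hH) fun B hB => by
    rw [show Bᴴ * (G * X * H - G * π X * H) = Bᴴ * G * (X - π X) * H by noncomm_ring,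
      trace_mul_cycle]
    exact hπ.trace_mul_sub_apply (mul_mem hH (mul_mem (star_mem hB) hG)) X

theorem conjTranspose_apply (hπ : IsOrthogonalProjection A π) (M : Matrix ι ι ℂ) :
    π Mᴴ = (π M)ᴴ :=
  hπ.eq_of_orthogonal (star_mem (hπ.mem M)) fun B hB => by
    rw [← conjTranspose_sub, ← conjTranspose_mul, trace_conjTranspose, trace_mul_comm,
      hπ.trace_mul_sub_apply hB, star_zero]

theorem posSemidef_apply (hπ : IsOrthogonalProjection A π) {M : Matrix ι ι ℂ}
    (hM : M.PosSemidef) : (π M).PosSemidef :=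
  posSemidef_of_forall_trace_mul_nonneg (hπ.mem M)
    (by rw [IsHermitian, ← hπ.conjTranspose_apply, hM.isHermitian.eq])
    fun B hB hBpsd => hπ.trace_mul_apply hB M ▸ hBpsd.trace_mul_nonneg_s16 hM

-- `1 - P ∈ A` annihilates `π ρ`, so `tr ((1 - P) * ρ) = tr ((1 - P) * π ρ) = 0`.
theorem mul_cfc_support (hπ : IsOrthogonalProjection A π) {ρ : Matrix ι ι ℂ}
    (hρ : ρ.PosSemidef) : ρ * cfc (fun x => Real.sqrt x * (Real.sqrt x)⁻¹) (π ρ) = ρ := by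
  set τ := π ρ
  set P := cfc (fun x => Real.sqrt x * (Real.sqrt x)⁻¹) τ
  have hτ : τ.PosSemidef := hπ.posSemidef_apply hρ
  have hτid : cfc id τ = τ := cfc_id ℝ τ hτ.isHermitian.isSelfAdjoint
  have hPτ : P * τ = τ := by
    conv_lhs => rw [← hτid]
    refine (cfc_mul_cfc_eq fun x hx => ?_).trans hτid
    by_cases h : Real.sqrt x = 0
    · simp [le_antisymm (Real.sqrt_eq_zero'.mp h) (hτ.spectrum_nonneg x hx)]
    · simp [h]
  have hEA : 1 - P ∈ A := sub_mem (one_mem A) (cfc_mem_starSubalgebra (hπ.mem ρ) _)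
  have hρE := hρ.mul_eq_zero_of_trace_mul_eq_zero (posSemidef_one_sub_cfc_support τ)
    (by rw [← hπ.trace_mul_apply hEA, sub_mul, one_mul, hPτ, sub_self, trace_zero])
  rwa [mul_sub, mul_one, sub_eq_zero, eq_comm] at hρE

/-- The lift is `C = Q ρ Q + (1 - P)` with `Q = (π ρ)^{-1/2}` the pseudo-inverse square root
(again `0⁻¹ = 0`) and `P` the support projection of `π ρ`. -/
theorem exists_posSemidef_lift (hπ : IsOrthogonalProjection A π) {ρ : Matrix ι ι ℂ}
    (hρ : ρ.PosSemidef) :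
    ∃ C : Matrix ι ι ℂ, C.PosSemidef ∧ π C = 1 ∧
      cfc Real.sqrt (π ρ) * C * cfc Real.sqrt (π ρ) = ρ := by
  set τ := π ρ
  have hτ : τ.PosSemidef := hπ.posSemidef_apply hρ
  set S := cfc Real.sqrt τ
  set Q := cfc (fun x => (Real.sqrt x)⁻¹) τ
  set P := cfc (fun x => Real.sqrt x * (Real.sqrt x)⁻¹) τ
  have hSQ : S * Q = P := cfc_mul_cfc_eq fun x _ => rfl
  have hQS : Q * S = P := cfc_mul_cfc_eq fun x _ => mul_comm _ _
  have hSP : S * P = S := cfc_mul_cfc_eq fun x _ => by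
    by_cases h : Real.sqrt x = 0 <;> simp [h]
  have hQτQ : Q * τ * Q = P := by
    conv_lhs => rw [← cfc_id' ℝ τ hτ.isHermitian.isSelfAdjoint]
    rw [cfc_mul_cfc_eq fun x _ => rfl]
    refine cfc_mul_cfc_eq fun x hx => ?_
    by_cases h : Real.sqrt x = 0
    · simp [h]
    · field_simp
      exact (Real.sq_sqrt (hτ.spectrum_nonneg x hx)).symm
  have hρP : ρ * P = ρ := hπ.mul_cfc_support hρ
  have hPρ : P * ρ = ρ := by
    have := congrArg conjTranspose hρP
    rwa [conjTranspose_mul, (isHermitian_cfc _ _ : P.IsHermitian).eq, hρ.isHermitian.eq] at this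
  have hQA : Q ∈ A := cfc_mem_starSubalgebra (hπ.mem ρ) _
  have hEA : 1 - P ∈ A := sub_mem (one_mem A) (cfc_mem_starSubalgebra (hπ.mem ρ) _)
  refine ⟨Q * ρ * Q + (1 - P), (hρ.cfc_mul_mul_cfc _ _).add (posSemidef_one_sub_cfc_support τ),
    ?_, ?_⟩
  · rw [hπ.map_add, hπ.apply_mul_mul hQA hQA, hQτQ, hπ.apply_of_mem hEA, add_sub_cancel]
  · rw [mul_add, add_mul, show S * (Q * ρ * Q) * S = S * Q * ρ * (Q * S) by noncomm_ring, hSQ,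
      hQS, hPρ, hρP, mul_sub, mul_one, hSP, sub_self, zero_mul, add_zero]

theorem apply_cfc_sqrt_mul_mul_cfc_sqrt (hπ : IsOrthogonalProjection A π) {C σ : Matrix ι ι ℂ}
    (hC : π C = 1) (hσ : σ.PosSemidef) (hσA : σ ∈ A) :
    π (cfc Real.sqrt σ * C * cfc Real.sqrt σ) = σ := by
  have hS := cfc_mem_starSubalgebra hσA Real.sqrt
  rw [hπ.apply_mul_mul hS hS, hC, mul_one, cfc_sqrt_mul_cfc_sqrt hσ]

end IsOrthogonalProjection

/-- If `A` is a *-subalgebra of `M_n` (containing the identity), then the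
orthogonal projection `D(M_n) → D(A) = D(M_n) ∩ A` w.r.t. the Frobenius inner
product is an open map. -/
theorem starSubalgebra_projection_open (n : ℕ)
    (A : StarSubalgebra ℂ (Matrix (Fin n) (Fin n) ℂ))
    (D : Set (Matrix (Fin n) (Fin n) ℂ))
    (hD : D = {ρ | ρ.PosSemidef ∧ ρ.trace = 1})
    (π : Matrix (Fin n) (Fin n) ℂ → Matrix (Fin n) (Fin n) ℂ)
    (hπmem : ∀ M, π M ∈ A)
    (hπorth : ∀ M, ∀ B ∈ A, (Bᴴ * (M - π M)).trace = 0) :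
    RelOpenMap π D (D ∩ (A : Set (Matrix (Fin n) (Fin n) ℂ))) := by
  have hπ : IsOrthogonalProjection A π := ⟨hπmem, hπorth⟩
  subst hD
  have hmaps : Set.MapsTo π {ρ | ρ.PosSemidef ∧ ρ.trace = 1}
      ({ρ | ρ.PosSemidef ∧ ρ.trace = 1} ∩ A) := fun ρ hρ =>
    ⟨⟨hπ.posSemidef_apply hρ.1, by rw [hπ.trace_apply, hρ.2]⟩, hπ.mem ρ⟩
  refine relOpenMap_of_forall_exists_section hmaps fun ρ hρ => ?_
  obtain ⟨C, hC, hπC, hCρ⟩ := hπ.exists_posSemidef_lift hρ.1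
  have hsqrt := continuousOn_cfc_of_continuous (ι := Fin n) Real.continuous_sqrt
  have hsec : ContinuousOn (fun σ => cfc Real.sqrt σ * C * cfc Real.sqrt σ)
      {σ | σ.IsHermitian} := (hsqrt.mul continuousOn_const).mul hsqrt
  refine ⟨_, (hsec.mono fun σ hσ => hσ.1.1.isHermitian).continuousWithinAt (hmaps hρ), hCρ, ?_⟩
  rintro σ ⟨⟨hσ, hσ1⟩, hσA⟩
  have hπσ := hπ.apply_cfc_sqrt_mul_mul_cfc_sqrt hπC hσ hσA
  exact ⟨⟨hC.cfc_mul_mul_cfc _ _, by rw [← hπ.trace_apply, hπσ, hσ1]⟩, hπσ⟩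
end

section
/- For the matrix system R = span_ℂ(1₃, X ⊕ 1, Z ⊕ 0) in M₃ (X, Z Pauli matrices), the restriction map S(M₃) → S(R), ℓ ↦ ℓ|_R, is not open at the state ω_λ represented by the density matrix (1−λ)|+⟩⟨+| ⊕ λ, for every λ ∈ (0,1]. -/
/-! The restriction of `ω_λ` to `R` is the vector state of `u = (cos (π/4), sin (π/4), 0)`, and it
is the limit, as `t → π/4`, of the restrictions of the vector states of `u_t = (cos t, sin t, 0)`.
For `w_t = (sin t, -cos t, 0)` the positive matrix `2 |w_t⟩⟨w_t|` equals
`1 - sin 2t • (X ⊕ 1) - cos 2t • (Z ⊕ 0) - (1 - sin 2t) • (0 ⊕ 1)`, so a state `ℓ` of `M₃` that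
agrees with `u_t` on `R` satisfies `0 ≤ ℓ (2 |w_t⟩⟨w_t|) = -(1 - sin 2t) ℓ (0 ⊕ 1)`, forcing
`ℓ (0 ⊕ 1) = 0` as soon as `sin 2t ≠ 1`. Since `ω_λ (0 ⊕ 1) = λ > 0`, the image of the open set
`{ℓ | ℓ (0 ⊕ 1) ≠ 0}` misses the restrictions of `u_t` for `t < π/4` close to `π/4`. -/

open Matrix ComplexOrder Filter Topology Real

def xBlock : Matrix (Fin 3) (Fin 3) ℂ := !![0, 1, 0; 1, 0, 0; 0, 0, 1]

def zBlock : Matrix (Fin 3) (Fin 3) ℂ := !![1, 0, 0; 0, -1, 0; 0, 0, 0]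

def corner : Matrix (Fin 3) (Fin 3) ℂ := diagonal ![0, 0, 1]

def pauliSystem : Submodule ℂ (Matrix (Fin 3) (Fin 3) ℂ) :=
  Submodule.span ℂ {1, xBlock, zBlock}

noncomputable def rhoLambda (lam : ℝ) : Matrix (Fin 3) (Fin 3) ℂ :=
  !![(((1 - lam) / 2 : ℝ) : ℂ), (((1 - lam) / 2 : ℝ) : ℂ), 0;
     (((1 - lam) / 2 : ℝ) : ℂ), (((1 - lam) / 2 : ℝ) : ℂ), 0;
     0, 0, (lam : ℂ)]

theorem posSemidef_corner : corner.PosSemidef :=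
  posSemidef_diagonal_iff.2 fun i => by fin_cases i <;> simp

theorem notMem_nhdsWithin_of_tendsto {α β : Type*} [TopologicalSpace β] {l : Filter α} [l.NeBot]
    {f : α → β} {b : β} {s t : Set β} (hf : Tendsto f l (𝓝 b)) (hs : ∀ᶠ x in l, f x ∈ s)
    (ht : ∀ᶠ x in l, f x ∉ t) : t ∉ 𝓝[s] b := fun h =>
  let ⟨_, hin, hout⟩ := ((tendsto_nhdsWithin_iff.2 ⟨hf, hs⟩).eventually_mem h |>.and ht).exists
  hout hin

section VectorState

variable {n : Type*} [Fintype n]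

def vectorState (v : n → ℂ) : Matrix n n ℂ →ₗ[ℂ] ℂ where
  toFun B := star v ⬝ᵥ (B *ᵥ v)
  map_add' B C := by simp only [add_mulVec, dotProduct_add]
  map_smul' c B := by simp only [smul_mulVec, dotProduct_smul, RingHom.id_apply]

theorem vectorState_apply (v : n → ℂ) (B : Matrix n n ℂ) :
    vectorState v B = star v ⬝ᵥ (B *ᵥ v) := rfl

theorem vectorState_nonneg (v : n → ℂ) {A : Matrix n n ℂ} (hA : A.PosSemidef) :
    0 ≤ vectorState v A :=
  hA.dotProduct_mulVec_nonneg v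

theorem continuous_vectorState_apply {X : Type*} [TopologicalSpace X] {v : X → n → ℂ}
    (hv : Continuous v) (B : Matrix n n ℂ) : Continuous fun x => vectorState (v x) B := by
  simp only [vectorState_apply]
  exact hv.star.dotProduct (continuous_const.matrix_mulVec hv)

end VectorState

noncomputable def cosSinVec (t : ℝ) : Fin 3 → ℂ := ![(cos t : ℂ), (sin t : ℂ), 0]

noncomputable def orthVec (t : ℝ) : Fin 3 → ℂ := ![(sin t : ℂ), -(cos t : ℂ), 0]

theorem continuous_cosSinVec : Continuous cosSinVec := by
  unfold cosSinVec
  fun_prop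

theorem vectorState_cosSinVec_one (t : ℝ) : vectorState (cosSinVec t) 1 = 1 := by
  simp [vectorState_apply, cosSinVec, dotProduct, Fin.sum_univ_three, ← Complex.cos_conj,
    ← Complex.sin_conj]
  linear_combination Complex.sin_sq_add_cos_sq (t : ℂ)

theorem vectorState_cosSinVec_xBlock (t : ℝ) :
    vectorState (cosSinVec t) xBlock = (sin (2 * t) : ℂ) := by
  simp [vectorState_apply, cosSinVec, xBlock, dotProduct, mulVec, Fin.sum_univ_three,
    ← Complex.cos_conj, ← Complex.sin_conj, Complex.sin_two_mul]
  ring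

theorem vectorState_cosSinVec_zBlock (t : ℝ) :
    vectorState (cosSinVec t) zBlock = (cos (2 * t) : ℂ) := by
  simp [vectorState_apply, cosSinVec, zBlock, dotProduct, mulVec, Fin.sum_univ_three,
    ← Complex.cos_conj, ← Complex.sin_conj, Complex.cos_two_mul]
  linear_combination -Complex.sin_sq_add_cos_sq (t : ℂ)

theorem two_smul_vecMulVec_orthVec (t : ℝ) :
    (2 : ℂ) • vecMulVec (orthVec t) (star (orthVec t)) =
      1 - (sin (2 * t) : ℂ) • xBlock - (cos (2 * t) : ℂ) • zBlock
        - (1 - sin (2 * t) : ℂ) • corner := by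
  ext i j
  simp only [Matrix.smul_apply, vecMulVec_apply, Matrix.sub_apply]
  fin_cases i <;> fin_cases j <;>
    simp [orthVec, xBlock, zBlock, corner, one_apply, ← Complex.cos_conj,
      ← Complex.sin_conj, Complex.sin_two_mul, Complex.cos_two_mul]
  all_goals first | ring1 | linear_combination 2 * Complex.sin_sq_add_cos_sq (t : ℂ)

theorem apply_corner_eq_zero_of_eqOn_vectorState (ℓ : Matrix (Fin 3) (Fin 3) ℂ →ₗ[ℂ] ℂ)
    (hpos : ∀ A : Matrix (Fin 3) (Fin 3) ℂ, A.PosSemidef → 0 ≤ ℓ A) {t : ℝ}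
    (hℓ : Set.EqOn ℓ (vectorState (cosSinVec t)) {1, xBlock, zBlock}) (ht : sin (2 * t) ≠ 1) :
    ℓ corner = 0 := by
  have hP : ℓ ((2 : ℂ) • vecMulVec (orthVec t) (star (orthVec t))) =
      -((1 - sin (2 * t) : ℂ) * ℓ corner) := by
    rw [two_smul_vecMulVec_orthVec, map_sub, map_sub, map_sub, map_smul, map_smul, map_smul,
      hℓ (by simp), hℓ (by simp), hℓ (by simp), vectorState_cosSinVec_one,
      vectorState_cosSinVec_xBlock, vectorState_cosSinVec_zBlock, smul_eq_mul, smul_eq_mul,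
      smul_eq_mul]
    have h := sin_sq_add_cos_sq (2 * t)
    linear_combination (-1 : ℂ) *
      (by exact_mod_cast h : (sin (2 * t) : ℂ) ^ 2 + (cos (2 * t) : ℂ) ^ 2 = 1)
  have hcoeff : (0 : ℂ) ≤ 1 - sin (2 * t) := by
    exact_mod_cast sub_nonneg.2 (sin_le_one _)
  have hnonpos : (1 - sin (2 * t) : ℂ) * ℓ corner ≤ 0 := by
    rw [← neg_nonneg, ← hP, map_smul, smul_eq_mul]
    exact mul_nonneg zero_le_two (hpos _ (posSemidef_vecMulVec_self_star _))
  have hnonneg := mul_nonneg hcoeff (hpos _ posSemidef_corner)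
  refine (mul_eq_zero.1 (le_antisymm hnonpos hnonneg)).resolve_left ?_
  exact_mod_cast sub_ne_zero.2 ht.symm

theorem eventually_sin_two_mul_ne_one : ∀ᶠ t in 𝓝[<] (π / 4), sin (2 * t) ≠ 1 := by
  filter_upwards [Ioo_mem_nhdsLT (by positivity : (0 : ℝ) < π / 4)] with t ht
  have h := sin_lt_sin_of_lt_of_le_pi_div_two (x := 2 * t) (y := π / 2)
    (by linarith [ht.1, pi_pos]) le_rfl (by linarith [ht.2])
  exact (sin_pi_div_two ▸ h).ne

theorem trace_rhoLambda_mul_corner (lam : ℝ) : (rhoLambda lam * corner).trace = lam := by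
  simp [rhoLambda, corner, trace, Fin.sum_univ_three, vecMul, dotProduct]

theorem trace_rhoLambda_mul_eq_vectorState (lam : ℝ) {A : Matrix (Fin 3) (Fin 3) ℂ}
    (hA : A ∈ pauliSystem) : (rhoLambda lam * A).trace = vectorState (cosSinVec (π / 4)) A := by
  refine LinearMap.eqOn_span' (f := traceLinearMap _ ℂ ℂ ∘ₗ LinearMap.mulLeft ℂ (rhoLambda lam))
    ?_ hA
  have hπ : 2 * (π / 4) = π / 2 := by ring
  rintro _ (rfl | rfl | rfl)
  · rw [vectorState_cosSinVec_one]
    simp [rhoLambda, trace, Fin.sum_univ_three]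
  · rw [vectorState_cosSinVec_xBlock, hπ, sin_pi_div_two]
    simp [rhoLambda, xBlock, trace, Fin.sum_univ_three]
  · rw [vectorState_cosSinVec_zBlock, hπ, cos_pi_div_two]
    simp [rhoLambda, zBlock, trace, Fin.sum_univ_three]

theorem tendsto_vectorState_cosSinVec (lam : ℝ) :
    Tendsto (fun t (A : pauliSystem) => vectorState (cosSinVec t) A) (𝓝[<] (π / 4))
      (𝓝 fun A => (rhoLambda lam * A).trace) := by
  have hcont : Continuous fun t (A : pauliSystem) => vectorState (cosSinVec t) A :=
    continuous_pi fun A => continuous_vectorState_apply continuous_cosSinVec A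
  have hbase : (fun A : pauliSystem => vectorState (cosSinVec (π / 4)) A) =
      fun A => (rhoLambda lam * A).trace :=
    funext fun A => (trace_rhoLambda_mul_eq_vectorState lam A.2).symm
  exact hbase ▸ (hcont.tendsto _).mono_left nhdsWithin_le_nhds

theorem restriction_not_open_example_general (lam : ℝ) (h0 : 0 < lam)
    (M₁ M₂ : Matrix (Fin 3) (Fin 3) ℂ)
    (hM₁ : M₁ = !![0, 1, 0; 1, 0, 0; 0, 0, 1])
    (hM₂ : M₂ = !![1, 0, 0; 0, -1, 0; 0, 0, 0])
    (R : Submodule ℂ (Matrix (Fin 3) (Fin 3) ℂ))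
    (hR : R = Submodule.span ℂ {(1 : Matrix (Fin 3) (Fin 3) ℂ), M₁, M₂})
    (SM : Set (Matrix (Fin 3) (Fin 3) ℂ → ℂ))
    (hSM : SM = {ℓ | IsLinearMap ℂ ℓ ∧
      (∀ A : Matrix (Fin 3) (Fin 3) ℂ, A.PosSemidef → 0 ≤ ℓ A) ∧ ℓ 1 = 1})
    (SR : Set (↥R → ℂ))
    (hSR : SR = {s | IsLinearMap ℂ s ∧
      (∀ A : ↥R, (A : Matrix (Fin 3) (Fin 3) ℂ).PosSemidef → 0 ≤ s A) ∧
      ∀ h : (1 : Matrix (Fin 3) (Fin 3) ℂ) ∈ R, s ⟨1, h⟩ = 1})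
    (restr : (Matrix (Fin 3) (Fin 3) ℂ → ℂ) → (↥R → ℂ))
    (hrestr : restr = fun ℓ A => ℓ (A : Matrix (Fin 3) (Fin 3) ℂ))
    (ρlam : Matrix (Fin 3) (Fin 3) ℂ)
    (hρ : ρlam = !![(((1 - lam) / 2 : ℝ) : ℂ), (((1 - lam) / 2 : ℝ) : ℂ), 0;
                    (((1 - lam) / 2 : ℝ) : ℂ), (((1 - lam) / 2 : ℝ) : ℂ), 0;
                    0, 0, (lam : ℂ)])
    (ω : Matrix (Fin 3) (Fin 3) ℂ → ℂ)
    (hω : ω = fun B => (ρlam * B).trace) :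
    ∃ N ∈ nhdsWithin ω SM, restr '' (N ∩ SM) ∉ nhdsWithin (restr ω) SR := by
  obtain rfl : M₁ = xBlock := hM₁
  obtain rfl : M₂ = zBlock := hM₂
  obtain rfl : R = pauliSystem := hR
  obtain rfl : ρlam = rhoLambda lam := hρ
  subst hSM hSR hrestr hω
  refine ⟨{ℓ | ℓ corner ≠ 0}, mem_nhdsWithin_of_mem_nhds <|
    (isOpen_ne_fun (continuous_apply _) continuous_const).mem_nhds ?_, ?_⟩
  · simp [trace_rhoLambda_mul_corner, h0.ne']
  refine notMem_nhdsWithin_of_tendsto (tendsto_vectorState_cosSinVec lam)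
    (.of_forall fun t => ⟨((vectorState (cosSinVec t)).domRestrict _).isLinear,
      fun A hA => vectorState_nonneg _ hA, fun _ => vectorState_cosSinVec_one t⟩) ?_
  filter_upwards [eventually_sin_two_mul_ne_one] with t ht
  rintro ⟨ℓ, ⟨hℓ, hlin, hpos, -⟩, hℓt⟩
  exact hℓ <| apply_corner_eq_zero_of_eqOn_vectorState (hlin.mk' ℓ) hpos
    (fun B hB => congrFun hℓt ⟨B, Submodule.subset_span hB⟩) ht

/-- For the matrix system `R = span_ℂ(1₃, X ⊕ 1, Z ⊕ 0)` in `M₃`, the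
restriction map `S(M₃) → S(R)`, `ℓ ↦ ℓ|_R`, is not open at the state `ω_λ`
represented by the density matrix `(1−λ)|+⟩⟨+| ⊕ λ`, for every `λ ∈ (0,1]`:
there is a neighborhood of `ω_λ` in `S(M₃)` whose image is not a neighborhood
of `ω_λ|_R` in `S(R)`. -/
theorem restriction_not_open_example (lam : ℝ) (h0 : 0 < lam) (h1 : lam ≤ 1)
    (M₁ M₂ : Matrix (Fin 3) (Fin 3) ℂ)
    (hM₁ : M₁ = !![0, 1, 0; 1, 0, 0; 0, 0, 1])
    (hM₂ : M₂ = !![1, 0, 0; 0, -1, 0; 0, 0, 0])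
    (R : Submodule ℂ (Matrix (Fin 3) (Fin 3) ℂ))
    (hR : R = Submodule.span ℂ {(1 : Matrix (Fin 3) (Fin 3) ℂ), M₁, M₂})
    (SM : Set (Matrix (Fin 3) (Fin 3) ℂ → ℂ))
    (hSM : SM = {ℓ | IsLinearMap ℂ ℓ ∧
      (∀ A : Matrix (Fin 3) (Fin 3) ℂ, A.PosSemidef → 0 ≤ ℓ A) ∧ ℓ 1 = 1})
    (SR : Set (↥R → ℂ))
    (hSR : SR = {s | IsLinearMap ℂ s ∧
      (∀ A : ↥R, (A : Matrix (Fin 3) (Fin 3) ℂ).PosSemidef → 0 ≤ s A) ∧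
      ∀ h : (1 : Matrix (Fin 3) (Fin 3) ℂ) ∈ R, s ⟨1, h⟩ = 1})
    (restr : (Matrix (Fin 3) (Fin 3) ℂ → ℂ) → (↥R → ℂ))
    (hrestr : restr = fun ℓ A => ℓ (A : Matrix (Fin 3) (Fin 3) ℂ))
    (ρlam : Matrix (Fin 3) (Fin 3) ℂ)
    (hρ : ρlam = !![(((1 - lam) / 2 : ℝ) : ℂ), (((1 - lam) / 2 : ℝ) : ℂ), 0;
                    (((1 - lam) / 2 : ℝ) : ℂ), (((1 - lam) / 2 : ℝ) : ℂ), 0;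
                    0, 0, (lam : ℂ)])
    (ω : Matrix (Fin 3) (Fin 3) ℂ → ℂ)
    (hω : ω = fun B => (ρlam * B).trace) :
    ∃ N ∈ nhdsWithin ω SM, restr '' (N ∩ SM) ∉ nhdsWithin (restr ω) SR :=
  restriction_not_open_example_general lam h0 M₁ M₂ hM₁ hM₂ R hR SM hSM SR hSR restr hrestr ρlam hρ
    ω hω
end
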